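/- arXiv:1606.01973 — 9 statements merged into one kernel-verified Lean document; each statement's English description precedes it below -/
import Mathlib

section
/- For every finite acyclic digraph H (a digraph containing no directed cycle) there exists a finite simple graph G such that G ⇒ H. -/
/-- An orientation of a simple graph `G`: an asymmetric relation `D` whose
symmetrization is exactly the adjacency relation of `G`. -/
def IsOrientation {V : Type*} (G : SimpleGraph V) (D : V → V → Prop) : Prop :=
  (∀ u v, ¬ (D u v ∧ D v u)) ∧ ∀ u v, G.Adj u v ↔ (D u v ∨ D v u)

/-- A digraph structure on a relation: no loops and no pairs of opposite arcs. -/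
def IsDigraph {W : Type*} (E : W → W → Prop) : Prop :=
  ∀ u v, ¬ (E u v ∧ E v u)

/-- `G ⇒ E`: every orientation `D` of `G` contains an isometric copy of the digraph `E`:
an injective map `f` inducing an isomorphism onto its image, preserving orientations,
such that distances (in the underlying undirected graphs) are preserved. -/
def IsoRamseyArrow {V W : Type*} (G : SimpleGraph V) (E : W → W → Prop) : Prop :=
  ∀ D : V → V → Prop, IsOrientation G D →
    ∃ f : W → V, Function.Injective f ∧
      (∀ u v, E u v ↔ D (f u) (f v)) ∧
      (∀ u v, (SimpleGraph.fromRel E).edist u v = G.edist (f u) (f v))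

/-- A digraph is acyclic if it has no directed cycles, equivalently its transitive
closure is irreflexive. -/
def DigraphAcyclic {W : Type*} (E : W → W → Prop) : Prop :=
  ∀ v, ¬ Relation.TransGen E v v

/-!
Let `A` be the underlying graph of `H` on `W`, `n = |W|` and `M = 2ⁿ`. The host graph lives on
`Fin M × (ι → W)`: two vertices are adjacent when their first coordinates differ and in every
coordinate `i : ι` their entries are equal or `A`-adjacent. Every `ω : ι → CliqueMap A M`
spans a copy of `K_M`, so an orientation colours the cube `ι → CliqueMap A M` by tournaments on
`Fin M`, and Hales–Jewett yields a combinatorial line whose points all carry the same tournament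
`μ`. Since `μ` has `2ⁿ` vertices it contains a transitive subtournament on `n` vertices, into
which `H` maps along a topological order; a vertex `u` is sent to the point of the line indexed
by the constant map `u`. For each edge `uv` of `A` a single point of the line contains both images,
so the orientation there is read off from `μ`. Projecting onto an active coordinate of the line
is a `1`-Lipschitz left inverse of the embedding, which therefore preserves distances.
-/

open Combinatorics Finset SimpleGraph

theorem exists_equiv_fin_lt_of_lt {W β : Type*} [Fintype W] [LinearOrder β] (f : W → β) :
    ∃ e : W ≃ Fin (Fintype.card W), ∀ u v, f u < f v → e u < e v := by
  let idx := Fintype.equivFin W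
  let σ := Tuple.sort (f ∘ idx.symm)
  refine ⟨idx.trans σ.symm, fun u v huv => ?_⟩
  by_contra! hle
  exact huv.not_ge (by simpa [σ] using Tuple.monotone_sort (f ∘ idx.symm) hle)

theorem DigraphAcyclic.exists_equiv_fin {W : Type*} [Fintype W] {E : W → W → Prop}
    (hacyc : DigraphAcyclic E) :
    ∃ e : W ≃ Fin (Fintype.card W), ∀ u v, E u v → e u < e v := by
  classical
  let rank u := #{x | Relation.TransGen E x u}
  have hrank : ∀ u v, E u v → rank u < rank v := by
    intro u v huv
    refine card_lt_card ⟨fun x hx => ?_, fun hsub => ?_⟩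
    · simp only [mem_filter, mem_univ, true_and] at hx ⊢
      exact hx.tail huv
    · have := hsub (by simpa using Relation.TransGen.single huv : u ∈ _)
      exact hacyc u (by simpa using this)
  obtain ⟨e, he⟩ := exists_equiv_fin_lt_of_lt rank
  exact ⟨e, fun u v huv => he u v (hrank u v huv)⟩

theorem exists_pairwise_list_of_tournament {α : Type*} {R : α → α → Prop}
    (hR : ∀ a b, a ≠ b → R a b ∨ R b a) (k : ℕ) (S : Finset α) (hS : 2 ^ k ≤ #S) :
    ∃ l : List α, l.length = k ∧ (∀ a ∈ l, a ∈ S) ∧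
      l.Pairwise (fun a b => a ≠ b ∧ R a b) := by
  classical
  induction k generalizing S with
  | zero => exact ⟨[], rfl, by simp, List.Pairwise.nil⟩
  | succ k ih =>
    obtain ⟨v, hv⟩ : S.Nonempty := card_pos.mp (lt_of_lt_of_le (by positivity) hS)
    have hsplit := card_filter_add_card_filter_not (s := S.erase v) (fun a => R a v)
    rw [card_erase_of_mem hv] at hsplit
    by_cases hin : 2 ^ k ≤ #{a ∈ S.erase v | R a v}
    · obtain ⟨l, hlen, hlS, hl⟩ := ih _ hin
      refine ⟨l ++ [v], by simp [hlen], fun a ha => ?_, ?_⟩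
      · rcases List.mem_append.mp ha with ha | ha
        · exact mem_of_mem_erase (mem_filter.mp (hlS a ha)).1
        · simp_all
      · refine List.pairwise_append.mpr ⟨hl, by simp, fun a ha b hb => ?_⟩
        obtain ⟨haS, hav⟩ := mem_filter.mp (hlS a ha)
        rw [List.mem_singleton.mp hb]
        exact ⟨ne_of_mem_erase haS, hav⟩
    · have hout : 2 ^ k ≤ #{a ∈ S.erase v | ¬ R a v} := by
        rw [pow_succ] at hS; omega
      obtain ⟨l, hlen, hlS, hl⟩ := ih _ hout
      refine ⟨v :: l, by simp [hlen], fun a ha => ?_, ?_⟩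
      · rcases List.mem_cons.mp ha with rfl | ha
        · exact hv
        · exact mem_of_mem_erase (mem_filter.mp (hlS a ha)).1
      · refine List.pairwise_cons.mpr ⟨fun a ha => ?_, hl⟩
        obtain ⟨haS, hav⟩ := mem_filter.mp (hlS a ha)
        have hne := ne_of_mem_erase haS
        exact ⟨hne.symm, (hR a v hne).resolve_left hav⟩

theorem DigraphAcyclic.exists_injective_of_tournament {W α : Type*} [Fintype W] [Fintype α]
    {E : W → W → Prop} (hacyc : DigraphAcyclic E) {R : α → α → Prop}
    (hR : ∀ a b, a ≠ b → R a b ∨ R b a) (hcard : 2 ^ Fintype.card W ≤ Fintype.card α) :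
    ∃ q : W → α, Function.Injective q ∧ ∀ u v, E u v → R (q u) (q v) := by
  obtain ⟨e, he⟩ := hacyc.exists_equiv_fin
  obtain ⟨l, hlen, -, hl⟩ := exists_pairwise_list_of_tournament hR _ univ hcard
  have hchain := List.pairwise_iff_get.mp hl
  let q := fun u => l.get ((e u).cast hlen.symm)
  have hq : ∀ u v, e u < e v → q u ≠ q v ∧ R (q u) (q v) := fun u v h => hchain _ _ h
  refine ⟨q, fun u v huv => e.injective ?_, fun u v huv => (hq u v (he u v huv)).2⟩
  by_contra hne
  rcases lt_or_gt_of_ne hne with h | h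
  · exact (hq u v h).1 huv
  · exact (hq v u h).1 huv.symm

theorem IsDigraph.fromRel_adj {W : Type*} {E : W → W → Prop} (hE : IsDigraph E) {u v : W}
    (h : E u v) : (fromRel E).Adj u v :=
  (SimpleGraph.fromRel_adj E u v).mpr ⟨fun huv => hE u u ⟨huv ▸ h, huv ▸ h⟩, .inl h⟩

namespace SimpleGraph

theorem edist_le_of_edist_adj_le_one {V W : Type*} {G : SimpleGraph V} {A : SimpleGraph W}
    (φ : V → W) (hφ : ∀ ⦃x y⦄, G.Adj x y → A.edist (φ x) (φ y) ≤ 1) (x y : V) :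
    A.edist (φ x) (φ y) ≤ G.edist x y := by
  rcases eq_or_ne (G.edist x y) ⊤ with h | h
  · simp [h]
  obtain ⟨p, hp⟩ := exists_walk_of_edist_ne_top h
  rw [← hp]
  clear hp h
  induction p with
  | nil => simp
  | @cons a b c hadj p ih =>
    calc A.edist (φ a) (φ c) ≤ A.edist (φ a) (φ b) + A.edist (φ b) (φ c) :=
          SimpleGraph.edist_triangle
      _ ≤ 1 + p.length := add_le_add (hφ hadj) ih
      _ = (p.cons hadj).length := by rw [Walk.length_cons]; push_cast; ring

end SimpleGraph

section RamseyHost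

variable {W : Type*} (A : SimpleGraph W) (M : ℕ) (ι : Type*)

abbrev CliqueMap : Type _ := {t : Fin M → W // A.IsClique (Set.range t)}

def ramseyHost : SimpleGraph (Fin M × (ι → W)) where
  Adj x y := x.1 ≠ y.1 ∧ ∀ i, x.2 i = y.2 i ∨ A.Adj (x.2 i) (y.2 i)
  symm := ⟨fun _ _ h => ⟨h.1.symm, fun i => (h.2 i).imp Eq.symm fun h => h.symm⟩⟩
  loopless := ⟨fun _ h => h.1 rfl⟩

variable {A M ι}

def CliqueMap.const (u : W) : CliqueMap A M :=
  ⟨fun _ => u, (Set.subsingleton_of_subset_singleton Set.range_const_subset).pairwise _⟩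

theorem CliqueMap.exists_apply_eq_apply_eq {u v : W} (huv : A.Adj u v) {c d : Fin M}
    (hcd : c ≠ d) : ∃ σ : CliqueMap A M, σ.1 c = u ∧ σ.1 d = v := by
  classical
  have hpair : A.IsClique {u, v} := isClique_pair.mpr fun _ => huv
  refine ⟨⟨fun x => if x = d then v else u, hpair.subset ?_⟩, by simp [hcd], by simp⟩
  rintro _ ⟨x, rfl⟩
  by_cases x = d <;> simp_all

theorem CliqueMap.eq_or_adj (σ : CliqueMap A M) (c d : Fin M) :
    σ.1 c = σ.1 d ∨ A.Adj (σ.1 c) (σ.1 d) :=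
  or_iff_not_imp_left.mpr (σ.2 ⟨c, rfl⟩ ⟨d, rfl⟩)

def cliqueCopy (ω : ι → CliqueMap A M) (c : Fin M) : Fin M × (ι → W) :=
  (c, fun i => (ω i).1 c)

theorem ramseyHost_adj_cliqueCopy (ω : ι → CliqueMap A M) {c d : Fin M} (hcd : c ≠ d) :
    (ramseyHost A M ι).Adj (cliqueCopy ω c) (cliqueCopy ω d) :=
  ⟨hcd, fun i => (ω i).eq_or_adj c d⟩

theorem edist_apply_le_one_of_ramseyHost_adj {x y : Fin M × (ι → W)}
    (h : (ramseyHost A M ι).Adj x y) (i : ι) : A.edist (x.2 i) (y.2 i) ≤ 1 :=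
  edist_le_one_iff_adj_or_eq.mpr ((h.2 i).symm.imp id id)

theorem cliqueCopy_line_congr (l : Line (CliqueMap A M) ι) {σ τ : CliqueMap A M} {c : Fin M}
    (h : σ.1 c = τ.1 c) : cliqueCopy (l σ) c = cliqueCopy (l τ) c := by
  refine Prod.ext rfl (funext fun i => ?_)
  cases hi : l.idxFun i <;> simp [cliqueCopy, hi, h]

theorem cliqueCopy_line_snd (l : Line (CliqueMap A M) ι) {i : ι} (hi : l.idxFun i = none)
    (σ : CliqueMap A M) (c : Fin M) : (cliqueCopy (l σ) c).2 i = σ.1 c := by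
  simp [cliqueCopy, hi]

def lineEmbedding (l : Line (CliqueMap A M) ι) (q : W → Fin M) (u : W) : Fin M × (ι → W) :=
  cliqueCopy (l (CliqueMap.const u)) (q u)

theorem lineEmbedding_eq_cliqueCopy (l : Line (CliqueMap A M) ι) {q : W → Fin M}
    (hq : Function.Injective q) {u v : W} (huv : A.Adj u v) :
    ∃ σ : CliqueMap A M, lineEmbedding l q u = cliqueCopy (l σ) (q u) ∧
      lineEmbedding l q v = cliqueCopy (l σ) (q v) := by
  obtain ⟨σ, hσu, hσv⟩ := CliqueMap.exists_apply_eq_apply_eq huv (hq.ne huv.ne)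
  exact ⟨σ, cliqueCopy_line_congr l hσu.symm, cliqueCopy_line_congr l hσv.symm⟩

theorem edist_lineEmbedding (l : Line (CliqueMap A M) ι) {q : W → Fin M}
    (hq : Function.Injective q) (u v : W) :
    (ramseyHost A M ι).edist (lineEmbedding l q u) (lineEmbedding l q v) = A.edist u v := by
  obtain ⟨i₀, hi₀⟩ := l.proper
  have hproj : ∀ u, (lineEmbedding l q u).2 i₀ = u := fun u => cliqueCopy_line_snd l hi₀ _ _
  refine le_antisymm (edist_le_of_edist_adj_le_one _ (fun a b hab => ?_) u v) ?_
  · obtain ⟨σ, ha, hb⟩ := lineEmbedding_eq_cliqueCopy l hq hab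
    rw [ha, hb, edist_eq_one_iff_adj.mpr (ramseyHost_adj_cliqueCopy _ (hq.ne hab.ne))]
  · simpa only [hproj] using edist_le_of_edist_adj_le_one (fun x => x.2 i₀)
      (fun x y h => edist_apply_le_one_of_ramseyHost_adj h i₀) (lineEmbedding l q u)
      (lineEmbedding l q v)

end RamseyHost

theorem isoRamseyArrow_ramseyHost {W : Type*} [Fintype W] [Nonempty W] {E : W → W → Prop}
    (hE : IsDigraph E) (hacyc : DigraphAcyclic E) {M : ℕ} (hM : 2 ^ Fintype.card W ≤ M)
    {ι : Type*}
    (hHJ : ∀ C : (ι → CliqueMap (fromRel E) M) → (Fin M → Fin M → Prop),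
      ∃ l : Line _ ι, l.IsMono C) :
    IsoRamseyArrow (ramseyHost (fromRel E) M ι) E := by
  intro D hD
  obtain ⟨l, μ, hμ⟩ := hHJ fun ω c d => D (cliqueCopy ω c) (cliqueCopy ω d)
  have hμ_tournament : ∀ c d, c ≠ d → μ c d ∨ μ d c := by
    intro c d hcd
    let ω := l (CliqueMap.const (Classical.arbitrary W))
    have := (hD.2 _ _).mp (ramseyHost_adj_cliqueCopy ω hcd)
    rwa [← hμ]
  obtain ⟨q, hq, hEμ⟩ :=
    hacyc.exists_injective_of_tournament hμ_tournament (by simpa using hM)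
  have hdist := edist_lineEmbedding l hq
  have hED : ∀ u v, E u v → D (lineEmbedding l q u) (lineEmbedding l q v) := by
    intro u v huv
    obtain ⟨σ, hu, hv⟩ := lineEmbedding_eq_cliqueCopy l hq (hE.fromRel_adj huv)
    rw [hu, hv, show D _ _ = μ _ _ from congrFun₂ (hμ σ) _ _]
    exact hEμ u v huv
  refine ⟨lineEmbedding l q, fun u v h => ?_, fun u v => ⟨hED u v, fun h => ?_⟩,
    fun u v => (hdist u v).symm⟩
  · simpa [h] using (hdist u v).symm
  · have hadj : (fromRel E).Adj u v := by
      rw [← edist_eq_one_iff_adj, ← hdist, edist_eq_one_iff_adj, hD.2]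
      exact .inl h
    exact ((fromRel_adj E u v).mp hadj).2.resolve_right
      fun hvu => hD.1 _ _ ⟨h, hED v u hvu⟩

theorem stmt0 (W : Type) [Fintype W] (E : W → W → Prop)
    (hE : IsDigraph E) (hacyc : DigraphAcyclic E) :
    ∃ (V : Type) (_ : Fintype V) (G : SimpleGraph V), IsoRamseyArrow G E := by
  classical
  cases isEmpty_or_nonempty W
  · exact ⟨PUnit, inferInstance, ⊥,
      fun _ _ => ⟨isEmptyElim, isEmptyElim, isEmptyElim, isEmptyElim⟩⟩
  obtain ⟨ι, _, hHJ⟩ := Line.exists_mono_in_high_dimension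
    (CliqueMap (fromRel E) (2 ^ Fintype.card W))
    (Fin (2 ^ Fintype.card W) → Fin (2 ^ Fintype.card W) → Prop)
  exact ⟨_, inferInstance, _, isoRamseyArrow_ramseyHost hE hacyc le_rfl hHJ⟩
end

section
/- Let 𝒯 and 𝒯′ be two families of finite oriented trees such that for every T′ ∈ 𝒯′ there exists a vertex t′ of T′ for which the sub-digraph of T′ induced on the remaining |T′|−1 vertices is an oriented tree belonging to 𝒯. If G is a finite simple graph with G ⇒ T for every T ∈ 𝒯, then the box product G □ K_{|G|+1} satisfies (G □ K_{|G|+1}) ⇒ T′ for every T′ ∈ 𝒯′. -/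
/-- An oriented tree: a digraph whose underlying undirected graph is a tree. -/
def IsOrientedTree {W : Type*} (E : W → W → Prop) : Prop :=
  IsDigraph E ∧ (SimpleGraph.fromRel E).IsTree

/-!
Removing `t′` from the tree `T′` leaves a tree, so `t′` is a leaf of `T′` with a unique
neighbour `s`, and `T′ - t′` sits isometrically inside `T′`. An orientation of
`G □ K_{n+1}` (`n = |G|`) restricts to an orientation of each of the `n + 1` layers
`G × {k}`, each of which therefore contains an isometric copy of `T`. By pigeonhole two
layers `k ≠ k′` place `s` over the same vertex `a` of `G`. The edge between `(a, k)` and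
`(a, k′)` is oriented one way or the other; taking the copy of `T′ - t′` in one of the two
layers and sending `t′` to the other endpoint gives a copy of `T′` with the right
orientation. It is isometric because distances in `G □ K_m` are `d_G` plus one between
distinct layers.
-/

open Function SimpleGraph

namespace SimpleGraph

variable {V W : Type*} {G : SimpleGraph V} {G' : SimpleGraph W}

theorem Hom.edist_le (f : G →g G') (u v : V) : G'.edist (f u) (f v) ≤ G.edist u v := by
  obtain h | h := eq_or_ne (G.edist u v) ⊤
  · simp [h]
  · obtain ⟨p, hp⟩ := exists_walk_of_edist_ne_top h
    rw [← hp, ← p.length_map f]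
    exact SimpleGraph.edist_le _

theorem Iso.edist_eq (f : G ≃g G') (u v : V) : G'.edist (f u) (f v) = G.edist u v :=
  le_antisymm (f.toHom.edist_le u v) (by simpa using f.symm.toHom.edist_le (f u) (f v))

def Iso.fromRel {r : V → V → Prop} {s : W → W → Prop} (e : r ≃r s) :
    fromRel r ≃g fromRel s where
  toEquiv := e.toEquiv
  map_rel_iff' := by simp [fromRel_adj, e.map_rel_iff, e.injective.ne_iff]

theorem fromRel_onFun_val (r : V → V → Prop) (S : Set V) :
    fromRel (r on ((↑) : S → V)) = (fromRel r).induce S := by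
  ext u v
  simp [fromRel_adj, onFun, Subtype.ext_iff]

theorem IsAcyclic.neighborSet_subsingleton_of_preconnected_induce (hG : G.IsAcyclic) {t : V}
    (h : (G.induce {t}ᶜ).Preconnected) : (G.neighborSet t).Subsingleton := by
  intro x (hx : G.Adj t x) y (hy : G.Adj t y)
  obtain ⟨q, hq⟩ := (h ⟨x, hx.ne'⟩ ⟨y, hy.ne'⟩).exists_isPath
  have ht : t ∉ (q.map (Embedding.induce {t}ᶜ).toHom).support := by
    rw [Walk.support_map, List.mem_map]
    rintro ⟨z, -, hz⟩
    exact z.2 hz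
  have hpath := (hq.map (Embedding.induce (G := G) {t}ᶜ).injective).cons ht (h := hx)
  exact ((hG.eq_snd_of_adj_start hpath hy (Walk.end_mem_support _)).trans (Walk.snd_cons _ _)).symm

theorem IsTree.exists_neighborSet_eq_singleton (hG : G.IsTree) {t : V}
    (h : (G.induce {t}ᶜ).Connected) : ∃ s, G.neighborSet t = {s} := by
  obtain ⟨x, hx⟩ := h.nonempty
  obtain ⟨p⟩ := hG.connected t x
  have hp : ¬ p.Nil := Walk.not_nil_of_ne (Ne.symm hx)
  have hsub := hG.isAcyclic.neighborSet_subsingleton_of_preconnected_induce h.preconnected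
  exact ⟨p.snd, hsub.eq_singleton_of_mem (p.adj_snd hp)⟩

theorem edist_induce_compl_singleton {t : V} (ht : (G.neighborSet t).Subsingleton)
    (x y : ({t}ᶜ : Set V)) : (G.induce {t}ᶜ).edist x y = G.edist x y := by
  classical
  refine le_antisymm ?_ ((Embedding.induce {t}ᶜ).toHom.edist_le x y)
  obtain h | h := eq_or_ne (G.edist x y) ⊤
  · simp [h]
  obtain ⟨p, hp⟩ := exists_walk_of_edist_ne_top h
  have hq : ∀ z ∈ p.bypass.support, z ∈ ({t}ᶜ : Set V) := fun z hz hzt =>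
    p.bypass_isPath.isTrail.not_mem_support_of_subsingleton_neighborSet
      (Ne.symm x.2) (Ne.symm y.2) ht (hzt ▸ hz)
  calc (G.induce {t}ᶜ).edist x y ≤ (p.bypass.induce _ hq).length := edist_le _
    _ = p.bypass.length := by rw [← Walk.length_map, Walk.map_induce]; rfl
    _ ≤ p.length := by exact_mod_cast p.length_bypass_le_length
    _ = G.edist x y := hp

theorem edist_eq_edist_add_one_of_neighborSet_eq {t s x : V} (ht : G.neighborSet t = {s})
    (hx : t ≠ x) : G.edist t x = G.edist s x + 1 := by
  have hts : G.Adj t s := by simp [← mem_neighborSet, ht]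
  refine le_antisymm ?_ (le_iInf fun p => ?_)
  · calc G.edist t x ≤ G.edist t s + G.edist s x := G.edist_triangle
      _ = G.edist s x + 1 := by rw [edist_eq_one_iff_adj.mpr hts, add_comm]
  · obtain ⟨z, hz, q, rfl⟩ := Walk.exists_eq_cons_of_ne hx p
    obtain rfl : z = s := by simpa [← mem_neighborSet, ht] using hz
    rw [Walk.length_cons, Nat.cast_succ]
    gcongr
    exact edist_le q

end SimpleGraph

section IsometricCopy

variable {V W K : Type*} {G : SimpleGraph V}

def IsIsometricCopy (G : SimpleGraph V) (D : V → V → Prop) (E : W → W → Prop) (f : W → V) :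
    Prop :=
  Injective f ∧ (∀ u v, E u v ↔ D (f u) (f v)) ∧
    ∀ u v, (fromRel E).edist u v = G.edist (f u) (f v)

theorem isoRamseyArrow_iff {E : W → W → Prop} :
    IsoRamseyArrow G E ↔ ∀ D, IsOrientation G D → ∃ f, IsIsometricCopy G D E f :=
  Iff.rfl

theorem IsoRamseyArrow.of_relIso {W' : Type*} {E : W → W → Prop} {E' : W' → W' → Prop}
    (e : E ≃r E') (h : IsoRamseyArrow G E') : IsoRamseyArrow G E := by
  intro D hD
  obtain ⟨f, hinj, hrel, hdist⟩ := h D hD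
  exact ⟨f ∘ e, hinj.comp e.injective, fun u v => e.map_rel_iff.symm.trans (hrel _ _),
    fun u v => ((Iso.fromRel e).edist_eq u v).symm.trans (hdist _ _)⟩

theorem IsOrientation.restrict_boxProd_left {H : SimpleGraph K} {D : V × K → V × K → Prop}
    (hD : IsOrientation (G □ H) D) (k : K) : IsOrientation G fun u v => D (u, k) (v, k) :=
  ⟨fun _ _ => hD.1 _ _, fun _ _ => boxProd_adj_left.symm.trans (hD.2 _ _)⟩

end IsometricCopy

section LeafExtension

variable {V W K : Type*} {G : SimpleGraph V} {D : V × K → V × K → Prop} {R : W → W → Prop}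
  {t : W} {f : ({t}ᶜ : Set W) → V} {s : ({t}ᶜ : Set W)} {b c : K}

open Classical in
noncomputable def leafExtension (f : ({t}ᶜ : Set W) → V) (s : ({t}ᶜ : Set W)) (b c : K)
    (x : W) : V × K :=
  if h : x = t then (f s, c) else (f ⟨x, h⟩, b)

theorem leafExtension_self : leafExtension f s b c t = (f s, c) :=
  dif_pos rfl

theorem leafExtension_of_ne (x : ({t}ᶜ : Set W)) : leafExtension f s b c x = (f x, b) :=
  dif_neg x.2

theorem leafExtension_injective (hf : Injective f) (hbc : b ≠ c) :
    Injective (leafExtension f s b c) := by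
  have hne : ∀ x : ({t}ᶜ : Set W), leafExtension f s b c x ≠ leafExtension f s b c t := by
    intro x h
    rw [leafExtension_self, leafExtension_of_ne] at h
    exact hbc (congrArg Prod.snd h)
  intro x y h
  rcases eq_or_ne t x with rfl | hx <;> rcases eq_or_ne t y with rfl | hy
  · rfl
  · exact absurd h.symm (hne ⟨y, hy.symm⟩)
  · exact absurd h (hne ⟨x, hx.symm⟩)
  · lift x to ({t}ᶜ : Set W) using hx.symm
    lift y to ({t}ᶜ : Set W) using hy.symm
    rw [leafExtension_of_ne, leafExtension_of_ne] at h
    exact congrArg Subtype.val (hf (congrArg Prod.fst h))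

theorem leafExtension_rel_iff (hR : IsDigraph R) (hleaf : (fromRel R).neighborSet t = {↑s})
    (hD : IsOrientation (G □ (⊤ : SimpleGraph K)) D) (hinj : Injective f)
    (hf : ∀ u v : ({t}ᶜ : Set W), R u v ↔ D (f u, b) (f v, b)) (hbc : b ≠ c)
    (hts : R t s ↔ D (f s, c) (f s, b)) (hst : R s t ↔ D (f s, b) (f s, c)) (x y : W) :
    R x y ↔ D (leafExtension f s b c x) (leafExtension f s b c y) := by
  have eq_of_adj_leaf : ∀ y : ({t}ᶜ : Set W), (fromRel R).Adj t y → y = s := by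
    intro y (h : (y : W) ∈ (fromRel R).neighborSet t)
    rw [hleaf] at h
    exact Subtype.ext h
  have eq_of_adj_image : ∀ y : ({t}ᶜ : Set W), D (f s, c) (f y, b) ∨ D (f y, b) (f s, c) →
      y = s := by
    intro y h
    rcases boxProd_adj.mp ((hD.2 _ _).mpr h) with ⟨-, hcb⟩ | ⟨-, hfy⟩
    · exact absurd hcb.symm hbc
    · exact (hinj hfy).symm
  rcases eq_or_ne t x with rfl | hx <;> rcases eq_or_ne t y with rfl | hy
  · rw [leafExtension_self]
    exact iff_of_false (fun h => hR _ _ ⟨h, h⟩) (fun h => hD.1 _ _ ⟨h, h⟩)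
  · lift y to ({t}ᶜ : Set W) using hy.symm
    rw [leafExtension_self, leafExtension_of_ne]
    by_cases hys : y = s
    · exact hys ▸ hts
    · exact iff_of_false
        (fun h => hys (eq_of_adj_leaf y ((fromRel_adj _ _ _).mpr ⟨Ne.symm y.2, .inl h⟩)))
        (fun h => hys (eq_of_adj_image y (.inl h)))
  · lift x to ({t}ᶜ : Set W) using hx.symm
    rw [leafExtension_self, leafExtension_of_ne]
    by_cases hxs : x = s
    · exact hxs ▸ hst
    · exact iff_of_false
        (fun h => hxs (eq_of_adj_leaf x ((fromRel_adj _ _ _).mpr ⟨Ne.symm x.2, .inr h⟩)))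
        (fun h => hxs (eq_of_adj_image x (.inr h)))
  · lift x to ({t}ᶜ : Set W) using hx.symm
    lift y to ({t}ᶜ : Set W) using hy.symm
    rw [leafExtension_of_ne, leafExtension_of_ne]
    exact hf x y

theorem leafExtension_edist (hleaf : (fromRel R).neighborSet t = {↑s})
    (hf : ∀ u v, (fromRel (R on ((↑) : ({t}ᶜ : Set W) → W))).edist u v = G.edist (f u) (f v))
    (hbc : b ≠ c) (x y : W) :
    (fromRel R).edist x y =
      (G □ (⊤ : SimpleGraph K)).edist (leafExtension f s b c x) (leafExtension f s b c y) := by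
  have hdist : ∀ u v : ({t}ᶜ : Set W), (fromRel R).edist u v = G.edist (f u) (f v) := by
    intro u v
    rw [← hf, fromRel_onFun_val,
      edist_induce_compl_singleton (hleaf ▸ Set.subsingleton_singleton)]
  have hdist_leaf : ∀ y : ({t}ᶜ : Set W),
      (fromRel R).edist t y = (G □ (⊤ : SimpleGraph K)).edist (f s, c) (f y, b) := by
    intro y
    rw [edist_eq_edist_add_one_of_neighborSet_eq hleaf (Ne.symm y.2), hdist, edist_boxProd,
      edist_top_of_ne hbc.symm]
  rcases eq_or_ne t x with rfl | hx <;> rcases eq_or_ne t y with rfl | hy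
  · rw [SimpleGraph.edist_self, SimpleGraph.edist_self]
  · lift y to ({t}ᶜ : Set W) using hy.symm
    rw [leafExtension_self, leafExtension_of_ne]
    exact hdist_leaf y
  · lift x to ({t}ᶜ : Set W) using hx.symm
    rw [leafExtension_self, leafExtension_of_ne, edist_comm, edist_comm (u := (f x, b))]
    exact hdist_leaf x
  · lift x to ({t}ᶜ : Set W) using hx.symm
    lift y to ({t}ᶜ : Set W) using hy.symm
    rw [leafExtension_of_ne, leafExtension_of_ne, hdist, edist_boxProd, SimpleGraph.edist_self,
      add_zero]

theorem IsIsometricCopy.leafExtension (hR : IsDigraph R)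
    (hleaf : (fromRel R).neighborSet t = {↑s}) (hD : IsOrientation (G □ (⊤ : SimpleGraph K)) D)
    (hf : IsIsometricCopy G (fun u v => D (u, b) (v, b)) (R on (↑)) f) (hbc : b ≠ c)
    (hts : R t s ↔ D (f s, c) (f s, b)) (hst : R s t ↔ D (f s, b) (f s, c)) :
    IsIsometricCopy (G □ ⊤) D R (leafExtension f s b c) :=
  ⟨leafExtension_injective hf.1 hbc, leafExtension_rel_iff hR hleaf hD hf.1 hf.2.1 hbc hts hst,
    leafExtension_edist hleaf hf.2.2 hbc⟩

end LeafExtension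

theorem IsoRamseyArrow.boxProd_top_of_neighborSet_eq_singleton {V W K : Type*} [Fintype V]
    [Fintype K] {G : SimpleGraph V} {R : W → W → Prop} {t s : W}
    (hcard : Fintype.card V < Fintype.card K) (hR : IsDigraph R)
    (hleaf : (fromRel R).neighborSet t = {s})
    (hG : IsoRamseyArrow G (R on ((↑) : ({t}ᶜ : Set W) → W))) :
    IsoRamseyArrow (G □ (⊤ : SimpleGraph K)) R := by
  have hts : (fromRel R).Adj t s := by simp [← mem_neighborSet, hleaf]
  set s₀ : ({t}ᶜ : Set W) := ⟨s, hts.ne'⟩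
  rw [isoRamseyArrow_iff] at hG ⊢
  intro D hD
  choose f hf using fun k => hG _ (hD.restrict_boxProd_left k)
  obtain ⟨k, k', hkk', hfk⟩ := Fintype.exists_ne_map_eq_of_card_lt (fun k => f k s₀) hcard
  set a := f k s₀
  have hR_xor : (R t s ∨ R s t) ∧ ¬(R t s ∧ R s t) := ⟨((fromRel_adj _ _ _).mp hts).2, hR t s⟩
  have hD_xor : (D (a, k) (a, k') ∨ D (a, k') (a, k)) ∧ ¬(D (a, k) (a, k') ∧ D (a, k') (a, k)) :=
    ⟨(hD.2 _ _).mp (boxProd_adj_right.mpr (by simpa using hkk')), hD.1 _ _⟩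
  obtain ⟨b, c, hbc, hb, hts', hst'⟩ : ∃ b c, b ≠ c ∧ f b s₀ = a ∧
      (R t s ↔ D (a, c) (a, b)) ∧ (R s t ↔ D (a, b) (a, c)) := by
    by_cases h : R t s ↔ D (a, k) (a, k')
    · exact ⟨k', k, hkk'.symm, hfk.symm, h, by tauto⟩
    · exact ⟨k, k', hkk', rfl, by tauto, by tauto⟩
  exact ⟨_, (hf b).leafExtension (s := s₀) hR hleaf hD hbc (hb ▸ hts') (hb ▸ hst')⟩

theorem stmt2_general (ι ι' : Type) (W : ι → Type) (W' : ι' → Type)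
    (E : ∀ i, W i → W i → Prop) (E' : ∀ j, W' j → W' j → Prop)
    (hT : ∀ i, IsOrientedTree (E i)) (hT' : ∀ j, IsOrientedTree (E' j))
    -- every tree in 𝒯′ has a vertex whose removal leaves a tree isomorphic to a member of 𝒯
    (hsub : ∀ j : ι', ∃ (t' : W' j) (i : ι) (g : W i ≃ {x : W' j // x ≠ t'}),
      ∀ u v, E i u v ↔ E' j (g u).1 (g v).1)
    (V : Type) [Fintype V] (G : SimpleGraph V)
    (hG : ∀ i, IsoRamseyArrow G (E i)) :
    ∀ j, IsoRamseyArrow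
      (G.boxProd (⊤ : SimpleGraph (Fin (Fintype.card V + 1)))) (E' j) := by
  intro j
  obtain ⟨t', i, g, hg⟩ := hsub j
  let e : E i ≃r (E' j on ((↑) : ({t'}ᶜ : Set (W' j)) → W' j)) := ⟨g, (hg _ _).symm⟩
  have hrest : ((fromRel (E' j)).induce {t'}ᶜ).Connected := by
    rw [← fromRel_onFun_val]
    exact (Iso.fromRel e).connected_iff.mp (hT i).2.connected
  obtain ⟨s, hs⟩ := (hT' j).2.exists_neighborSet_eq_singleton hrest
  exact ((hG i).of_relIso e.symm).boxProd_top_of_neighborSet_eq_singleton (by simp) (hT' j).1 hs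

theorem stmt2 (ι ι' : Type) (W : ι → Type) (W' : ι' → Type)
    [∀ i, Fintype (W i)] [∀ j, Fintype (W' j)]
    (E : ∀ i, W i → W i → Prop) (E' : ∀ j, W' j → W' j → Prop)
    (hT : ∀ i, IsOrientedTree (E i)) (hT' : ∀ j, IsOrientedTree (E' j))
    -- every tree in 𝒯′ has a vertex whose removal leaves a tree isomorphic to a member of 𝒯
    (hsub : ∀ j : ι', ∃ (t' : W' j) (i : ι) (g : W i ≃ {x : W' j // x ≠ t'}),
      ∀ u v, E i u v ↔ E' j (g u).1 (g v).1)
    (V : Type) [Fintype V] (G : SimpleGraph V)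
    (hG : ∀ i, IsoRamseyArrow G (E i)) :
    ∀ j, IsoRamseyArrow
      (G.boxProd (⊤ : SimpleGraph (Fin (Fintype.card V + 1)))) (E' j) :=
  stmt2_general ι ι' W W' E E' hT hT' hsub V G hG
end

section
/- Let n, k ∈ ℕ and let 𝓗 be a family of oriented trees on n vertices such that every finite simple graph G′ with chromatic number at least k satisfies G′ ⇀ T for all T ∈ 𝓗. Then every finite simple graph G with chromatic number at least k and girth at least 2n−2 satisfies G ⇒ T for all T ∈ 𝓗. -/
/-- `G ⇀ E`: every orientation `D` of `G` contains an injective orientation-preserving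
(not necessarily induced) copy of the digraph `E`. -/
def WeakArrow {V W : Type*} (G : SimpleGraph V) (E : W → W → Prop) : Prop :=
  ∀ D : V → V → Prop, IsOrientation G D →
    ∃ f : W → V, Function.Injective f ∧ (∀ u v, E u v → D (f u) (f v))


lemma exists_cycle_of_two_paths {V : Type*} {G : SimpleGraph V} {x y : V}
    (p q : G.Walk x y) (hp : p.IsPath) (hq : q.IsPath) (hne : p ≠ q) :
    ∃ (z : V) (c : G.Walk z z), c.IsCycle ∧ c.length ≤ p.length + q.length := by
  classical
  set s : Set (Sym2 V) := {e | e ∈ p.edges ∨ e ∈ q.edges} with hs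
  have hsub : s ⊆ G.edgeSet := by
    rintro e (he | he)
    · exact p.edges_subset_edgeSet he
    · exact q.edges_subset_edgeSet he
  set H := SimpleGraph.fromEdgeSet s with hH
  have hmemH : ∀ e ∈ s, e ∈ H.edgeSet := by
    intro e he
    rw [hH, SimpleGraph.edgeSet_fromEdgeSet]
    exact ⟨he, G.not_isDiag_of_mem_edgeSet (hsub he)⟩
  have hHsubG : H.edgeSet ⊆ G.edgeSet := by
    rw [hH, SimpleGraph.edgeSet_fromEdgeSet]
    exact fun e he => hsub he.1
  have hpH : ∀ e ∈ p.edges, e ∈ H.edgeSet := fun e he => hmemH e (Or.inl he)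
  have hqH : ∀ e ∈ q.edges, e ∈ H.edgeSet := fun e he => hmemH e (Or.inr he)
  have hback : ∀ (w : G.Walk x y) (hw : ∀ e ∈ w.edges, e ∈ H.edgeSet),
      (w.transfer H hw).transfer G (fun e he =>
        hHsubG ((w.transfer H hw).edges_subset_edgeSet he)) = w := by
    intro w hw
    rw [SimpleGraph.Walk.transfer_transfer, SimpleGraph.Walk.transfer_self]
  have hnacy : ¬ H.IsAcyclic := by
    intro hA
    have heq := hA.path_unique ⟨p.transfer H hpH, hp.transfer hpH⟩
      ⟨q.transfer H hqH, hq.transfer hqH⟩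
    have heq' : p.transfer H hpH = q.transfer H hqH := congrArg Subtype.val heq
    apply hne
    calc p = (p.transfer H hpH).transfer G _ := (hback p hpH).symm
    _ = (q.transfer H hqH).transfer G _ := by congr 1
    _ = q := hback q hqH
  rw [SimpleGraph.IsAcyclic] at hnacy
  push_neg at hnacy
  obtain ⟨z, c, hc⟩ := hnacy
  have hcsub : ∀ e ∈ c.edges, e ∈ G.edgeSet := fun e he =>
    hHsubG (c.edges_subset_edgeSet he)
  refine ⟨z, c.transfer G hcsub, hc.transfer hcsub, ?_⟩
  rw [SimpleGraph.Walk.length_transfer]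
  have hsubl : c.edges ⊆ p.edges ++ q.edges := by
    intro e he
    have : e ∈ s := by
      have := c.edges_subset_edgeSet he
      rw [hH, SimpleGraph.edgeSet_fromEdgeSet] at this
      exact this.1
    rw [List.mem_append]
    exact this
  have := (List.subperm_of_subset hc.edges_nodup hsubl).length_le
  rw [List.length_append, SimpleGraph.Walk.length_edges,
    SimpleGraph.Walk.length_edges, SimpleGraph.Walk.length_edges] at this
  exact this

theorem stmt6 (n k : ℕ) (ι : Type) (W : ι → Type) [∀ i, Fintype (W i)]
    (E : ∀ i, W i → W i → Prop)
    (hcard : ∀ i, Fintype.card (W i) = n)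
    (hT : ∀ i, IsOrientedTree (E i))
    (hBurr : ∀ (V' : Type) (_ : Fintype V') (G' : SimpleGraph V'),
      (k : ℕ∞) ≤ G'.chromaticNumber → ∀ i, WeakArrow G' (E i))
    (V : Type) [Fintype V] (G : SimpleGraph V)
    (hchi : (k : ℕ∞) ≤ G.chromaticNumber)
    (hgirth : ((2 * n - 2 : ℕ) : ℕ∞) ≤ G.egirth) :
    ∀ i, IsoRamseyArrow G (E i) := by
  classical
  intro i D hD
  obtain ⟨f, finj, fedge⟩ := hBurr V ‹Fintype V› G hchi i D hD
  set T := SimpleGraph.fromRel (E i) with hTdef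
  obtain ⟨hdig, htree⟩ := hT i
  have hom : ∀ {u v : W i}, T.Adj u v → G.Adj (f u) (f v) := by
    intro u v huv
    rw [hTdef, SimpleGraph.fromRel_adj] at huv
    rcases huv.2 with h | h
    · exact (hD.2 _ _).mpr (Or.inl (fedge _ _ h))
    · exact (hD.2 _ _).mpr (Or.inr (fedge _ _ h))
  let F : T →g G := ⟨f, fun h => hom h⟩
  have hdist : ∀ u v, T.edist u v = G.edist (f u) (f v) := by
    intro u v
    obtain ⟨q0, hq0len⟩ := htree.isConnected.exists_walk_length_eq_edist u v
    have le1 : G.edist (f u) (f v) ≤ T.edist u v := by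
      rw [← hq0len]
      have := SimpleGraph.edist_le (q0.map F)
      rwa [SimpleGraph.Walk.length_map] at this
    refine le_antisymm ?_ le1
    by_contra hlt
    push_neg at hlt
    -- G.edist (f u) (f v) < T.edist u v
    have hGne : G.edist (f u) (f v) ≠ ⊤ := by
      intro h
      rw [h] at hlt
      exact (not_top_lt hlt)
    obtain ⟨p0, hp0len⟩ := SimpleGraph.exists_walk_of_edist_ne_top hGne
    set pb := p0.bypass with hpb
    have hpbpath : pb.IsPath := p0.bypass_isPath
    set tq := q0.bypass with htq
    have htqpath : tq.IsPath := q0.bypass_isPath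
    have htqlen : (tq.length : ℕ∞) = T.edist u v := by
      refine le_antisymm ?_ (SimpleGraph.edist_le tq)
      rw [← hq0len]
      exact_mod_cast q0.length_bypass_le
    set qim := tq.map F with hqim
    have hqimpath : qim.IsPath :=
      SimpleGraph.Walk.map_isPath_of_injective finj htqpath
    have hqimlen : qim.length = tq.length := SimpleGraph.Walk.length_map _ _
    have hpblen : (pb.length : ℕ∞) ≤ G.edist (f u) (f v) := by
      rw [← hp0len]
      exact_mod_cast p0.length_bypass_le
    have hlensne : pb.length < qim.length := by
      rw [hqimlen]
      have : (pb.length : ℕ∞) < (tq.length : ℕ∞) := lt_of_le_of_lt hpblen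
        (lt_of_lt_of_le hlt (le_of_eq htqlen.symm))
      exact_mod_cast this
    have hne : pb ≠ qim := fun h => absurd (congrArg SimpleGraph.Walk.length h)
      (Nat.ne_of_lt hlensne)
    obtain ⟨z, c, hc, hclen⟩ := exists_cycle_of_two_paths pb qim hpbpath hqimpath hne
    have hcgirth : G.egirth ≤ c.length := by
      exact iInf_le_of_le z (iInf_le_of_le c (iInf_le_of_le hc (le_refl _)))
    have htlt : tq.length < n := by
      rw [← hcard i]
      exact htqpath.length_lt
    have hbound : c.length < 2 * n - 2 := by
      have h1 : c.length ≤ pb.length + qim.length := hclen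
      rw [hqimlen] at h1
      omega
    have : ((2 * n - 2 : ℕ) : ℕ∞) ≤ (c.length : ℕ∞) := le_trans hgirth hcgirth
    have : (2 * n - 2 : ℕ) ≤ c.length := by exact_mod_cast this
    omega
  refine ⟨f, finj, fun u v => ⟨fedge u v, fun h => ?_⟩, fun u v => hdist u v⟩
  have hadj : G.Adj (f u) (f v) := (hD.2 _ _).mpr (Or.inl h)
  have h1 : T.edist u v = 1 := by
    rw [hdist]
    exact SimpleGraph.edist_eq_one_iff_adj.mpr hadj
  have hTadj : T.Adj u v := SimpleGraph.edist_eq_one_iff_adj.mp h1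
  rw [hTdef, SimpleGraph.fromRel_adj] at hTadj
  rcases hTadj.2 with h' | h'
  · exact h'
  · exact absurd ⟨h, fedge _ _ h'⟩ (hD.1 _ _)
end

section
/- For every n ≥ 1, every finite simple graph G with chromatic number at least n and girth at least 2n−2 satisfies G ⇒ I_n. -/
/-- The directed path `I n` on vertex set `Fin n`, with arcs `(i, i+1)`. -/
def dirPath (n : ℕ) : Fin n → Fin n → Prop :=
  fun i j => (i : ℕ) + 1 = (j : ℕ)

/-!
By the Gallai–Roy theorem, an orientation `D` of a graph with `χ(G) ≥ n` contains a directed walk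
`v₀ → v₁ → ⋯ → v_{n-1}`: colour every vertex by the length of the longest directed walk starting
at it. Since `D` has no pair of opposite arcs, this walk never backtracks (`vᵢ ≠ vᵢ₊₂`). When the
girth is at least `2(n-1)` such a walk is geodesic, `d(v_a, v_b) = |a - b|`: a repeated vertex or a
shortcut between `v_a` and `v_b` would combine with the segment of the walk into a cycle shorter
than `2(n-1)`. These are exactly the distances of the path `I_n`, and they also force `i ↦ vᵢ` to be
injective and to induce no arcs besides `vᵢ → vᵢ₊₁`.
-/

namespace SimpleGraph

variable {V : Type*} {G : SimpleGraph V}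

theorem colorable_of_forall_exists_not_rel {D : V → V → Prop}
    (hD : ∀ u v, G.Adj u v → D u v ∨ D v u) {k : ℕ}
    (h : ∀ g : ℕ → V, ∃ i < k, ¬ D (g i) (g (i + 1))) : G.Colorable k := by
  let S : V → Set ℕ := fun v => {m | ∃ g : ℕ → V, g 0 = v ∧ ∀ i < m, D (g i) (g (i + 1))}
  have hS_lt : ∀ v, ∀ m ∈ S v, m < k := by
    rintro v m ⟨g, -, hg⟩
    obtain ⟨i, hik, hi⟩ := h g
    by_contra! hkm
    exact hi (hg i (by omega))
  have hS_bdd : ∀ v, BddAbove (S v) := fun v => ⟨k, fun m hm => (hS_lt v m hm).le⟩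
  let height : V → ℕ := fun v => sSup (S v)
  have height_mem : ∀ v, height v ∈ S v := fun v =>
    Nat.sSup_mem ⟨0, fun _ => v, rfl, fun _ hi => absurd hi (Nat.not_lt_zero _)⟩ (hS_bdd v)
  have height_lt_of_rel : ∀ u v, D u v → height v < height u := by
    intro u v huv
    obtain ⟨g, hg0, hg⟩ := height_mem v
    refine Nat.lt_of_succ_le (le_csSup (hS_bdd u) ⟨fun i => Nat.casesOn i u g, rfl, ?_⟩)
    rintro (_ | i) hi
    · simpa [hg0] using huv
    · exact hg i (by omega)
  refine ⟨Coloring.mk (fun v => ⟨height v, hS_lt v _ (height_mem v)⟩) fun {u v} huv heq => ?_⟩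
  have heq : height u = height v := congrArg Fin.val heq
  rcases hD u v huv with h | h
  · exact (height_lt_of_rel u v h).ne heq.symm
  · exact (height_lt_of_rel v u h).ne heq

theorem exists_rel_chain_of_le_chromaticNumber {D : V → V → Prop}
    (hD : ∀ u v, G.Adj u v → D u v ∨ D v u) {k : ℕ}
    (hk : ((k + 1 : ℕ) : ℕ∞) ≤ G.chromaticNumber) :
    ∃ g : ℕ → V, ∀ i < k, D (g i) (g (i + 1)) := by
  by_contra! h
  have := hk.trans (colorable_of_forall_exists_not_rel hD h).chromaticNumber_le
  norm_cast at this
  omega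

namespace Walk

def ofSeq (g : ℕ → V) : ∀ k, (∀ i < k, G.Adj (g i) (g (i + 1))) → G.Walk (g 0) (g k)
  | 0, _ => nil
  | k + 1, h => (ofSeq g k fun i hi => h i (by omega)).concat (h k (by omega))

variable {g : ℕ → V} {k : ℕ} (h : ∀ i < k, G.Adj (g i) (g (i + 1)))

@[simp]
theorem length_ofSeq : (ofSeq g k h).length = k := by
  induction k with
  | zero => rfl
  | succ k ih => rw [ofSeq, length_concat, ih]

theorem support_ofSeq : (ofSeq g k h).support = (List.range (k + 1)).map g := by
  induction k with
  | zero => rfl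
  | succ k ih =>
    rw [ofSeq, support_concat, ih, List.range_succ (n := k + 1), List.map_append]
    rfl

theorem isPath_ofSeq (hg : ∀ x y, x < y → y ≤ k → g x ≠ g y) : (ofSeq g k h).IsPath := by
  rw [isPath_def, support_ofSeq, List.nodup_map_iff_inj_on List.nodup_range]
  intro x hx y hy hxy
  rw [List.mem_range] at hx hy
  by_contra hne
  rcases Nat.lt_or_gt_of_ne hne with hlt | hlt
  exacts [hg x y hlt (by omega) hxy, hg y x hlt (by omega) hxy.symm]

end Walk

theorem egirth_le_length_add_length {u v : V} {p q : G.Walk u v} (hp : p.IsPath)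
    (hq : q.IsPath) (hpq : p.length ≠ q.length) :
    G.egirth ≤ ((p.length + q.length : ℕ) : ℕ∞) := by
  classical
  let H := fromEdgeSet {e | e ∈ p.edges ++ q.edges}
  have hHG : H ≤ G := (fromEdgeSet_le G).2 fun e he => by
    rcases List.mem_append.1 he.1 with he | he
    exacts [p.edges_subset_edgeSet he, q.edges_subset_edgeSet he]
  have hH : ∀ e ∈ p.edges ++ q.edges, e ∈ H.edgeSet := fun e he => by
    rw [edgeSet_fromEdgeSet]
    rcases List.mem_append.1 he with he' | he'
    exacts [⟨he, G.not_isDiag_of_mem_edgeSet (p.edges_subset_edgeSet he')⟩,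
      ⟨he, G.not_isDiag_of_mem_edgeSet (q.edges_subset_edgeSet he')⟩]
  have hHcyc : ¬ H.IsAcyclic := fun hacyc => hpq <| by
    have := (hacyc.subsingleton_path u v).elim
      ⟨p.transfer H fun e he => hH e (List.mem_append_left _ he), hp.transfer _⟩
      ⟨q.transfer H fun e he => hH e (List.mem_append_right _ he), hq.transfer _⟩
    simpa using congrArg (fun r : H.Path u v => r.1.length) this
  obtain ⟨a, c, hc, hcH⟩ := exists_egirth_eq_length.2 hHcyc
  have hc_le : c.length ≤ p.length + q.length := by
    have hsub : c.edges ⊆ p.edges ++ q.edges := fun e he =>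
      (edgeSet_fromEdgeSet _ ▸ c.edges_subset_edgeSet he).1
    simpa using (hc.isCircuit.isTrail.edges_nodup.subperm hsub).length_le
  calc G.egirth ≤ H.egirth := egirth_anti hHG
    _ = c.length := hcH
    _ ≤ _ := by exact_mod_cast hc_le

theorem Walk.IsPath.edist_eq_length {u v : V} {p : G.Walk u v} (hp : p.IsPath)
    (hgirth : ((2 * p.length : ℕ) : ℕ∞) ≤ G.egirth) : G.edist u v = p.length := by
  classical
  refine le_antisymm (edist_le p) (not_lt.1 fun hlt => ?_)
  obtain ⟨w, hw⟩ := exists_walk_of_edist_ne_top (hlt.trans_le le_top).ne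
  have hw_lt : w.length < p.length := by exact_mod_cast hw ▸ hlt
  have hq_lt : w.bypass.length < p.length := w.length_bypass_le_length.trans_lt hw_lt
  have := hgirth.trans (egirth_le_length_add_length hp w.bypass_isPath (by omega))
  norm_cast at this
  omega

theorem edist_eq_dist_of_nonbacktracking {g : ℕ → V} {L : ℕ}
    (hadj : ∀ i < L, G.Adj (g i) (g (i + 1))) (hback : ∀ i, i + 2 ≤ L → g i ≠ g (i + 2))
    (hgirth : ((2 * L : ℕ) : ℕ∞) ≤ G.egirth) {a b : ℕ} (ha : a ≤ L) (hb : b ≤ L) :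
    G.edist (g a) (g b) = Nat.dist a b := by
  suffices key : ∀ k a, a + k ≤ L → G.edist (g a) (g (a + k)) = k by
    rcases le_total a b with hab | hab
    · rw [Nat.dist_eq_sub_of_le hab, ← key (b - a) a (by omega), Nat.add_sub_cancel' hab]
    · rw [edist_comm, Nat.dist_eq_sub_of_le_right hab, ← key (a - b) b (by omega),
        Nat.add_sub_cancel' hab]
  intro k
  induction k using Nat.strong_induction_on with
  | _ k ih =>
  intro a hak
  have hseg : ∀ i < k, G.Adj (g (a + i)) (g (a + i + 1)) := fun i hi => hadj (a + i) (by omega)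
  -- A repetition `g (a + x) = g (a + y)` is excluded by the induction hypothesis unless it spans
  -- the whole segment; then `g (a + k - 1)` would be adjacent to `g a` at distance `k - 1`,
  -- forcing `k = 2`, which is backtracking.
  have hinj : ∀ x y, x < y → y ≤ k → g (a + x) ≠ g (a + y) := by
    intro x y hxy hy heq
    by_cases hshort : y - x < k
    · have := ih (y - x) hshort (a + x) (by omega)
      rw [show a + x + (y - x) = a + y by omega, heq, edist_self] at this
      exact absurd this (by exact_mod_cast (Nat.sub_pos_of_lt hxy).ne)
    obtain ⟨rfl, rfl⟩ : x = 0 ∧ k = y := by omega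
    have hlast : G.Adj (g (a + (k - 1))) (g a) := by
      simpa [show a + (k - 1) + 1 = a + k by omega, ← heq] using hseg (k - 1) (by omega)
    obtain rfl | hk := Nat.eq_or_lt_of_le hxy
    · exact hlast.ne (by simp)
    have := ih (k - 1) (by omega) a (by omega)
    rw [edist_comm, edist_eq_one_iff_adj.2 hlast] at this
    obtain rfl : k = 2 := by norm_cast at this; omega
    exact hback a (by omega) heq
  have hshort : ((2 * k : ℕ) : ℕ∞) ≤ G.egirth := le_trans (by norm_cast; omega) hgirth
  simpa using (Walk.isPath_ofSeq hseg hinj).edist_eq_length (by simpa using hshort)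

theorem dist_le_length_of_walk_pathGraph {n : ℕ} {u v : Fin n} (p : (pathGraph n).Walk u v) :
    Nat.dist u v ≤ p.length := by
  induction p with
  | nil => simp [Nat.dist_self]
  | cons h p ih =>
    rw [pathGraph_adj] at h
    simp only [Nat.dist, Walk.length_cons] at ih ⊢
    omega

theorem edist_pathGraph_le {n : ℕ} {u v : Fin n} (huv : u ≤ v) :
    (pathGraph n).edist u v ≤ ((v - u : ℕ) : ℕ∞) := by
  let g : ℕ → Fin n := fun t => ⟨min (u + t) v, by omega⟩
  have hadj : ∀ i < (v : ℕ) - u, (pathGraph n).Adj (g i) (g (i + 1)) := fun i hi => by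
    rw [pathGraph_adj]
    simp only [g]
    omega
  have hg0 : g 0 = u := Fin.ext (by simpa [g] using huv)
  have hgk : g (v - u) = v := Fin.ext (by simp [g]; omega)
  simpa using edist_le ((Walk.ofSeq g _ hadj).copy hg0 hgk)

theorem edist_pathGraph {n : ℕ} (u v : Fin n) : (pathGraph n).edist u v = Nat.dist u v := by
  refine le_antisymm ?_ ?_
  · rcases le_total u v with huv | huv
    · simpa [Nat.dist_eq_sub_of_le huv] using edist_pathGraph_le huv
    · simpa [edist_comm, Nat.dist_eq_sub_of_le_right huv] using edist_pathGraph_le huv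
  · obtain ⟨w, hw⟩ := (pathGraph_preconnected n u v).exists_walk_length_eq_edist
    rw [← hw]
    exact_mod_cast dist_le_length_of_walk_pathGraph w

theorem fromRel_dirPath (n : ℕ) : fromRel (dirPath n) = pathGraph n := by
  ext u v
  simp only [fromRel_adj, pathGraph_adj, dirPath]
  constructor
  · exact And.right
  · intro h
    exact ⟨fun huv => by subst huv; omega, h⟩

end SimpleGraph

open SimpleGraph

theorem exists_dirPath_copy_of_edist_eq {V : Type*} {G : SimpleGraph V} {D : V → V → Prop}
    (hD : IsOrientation G D) {n : ℕ} {g : ℕ → V} (hg : ∀ i < n - 1, D (g i) (g (i + 1)))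
    (hdist : ∀ a b : Fin n, G.edist (g a) (g b) = Nat.dist a b) :
    ∃ f : Fin n → V, Function.Injective f ∧ (∀ a b, dirPath n a b ↔ D (f a) (f b)) ∧
      ∀ a b, (fromRel (dirPath n)).edist a b = G.edist (f a) (f b) := by
  obtain ⟨hasymm, hadj⟩ := hD
  refine ⟨fun i => g i, fun a b hab => ?_, fun a b => ⟨fun hab => ?_, fun hab => ?_⟩, fun a b => ?_⟩
  · have h0 := hdist a b
    rw [show g a = g b from hab, edist_self] at h0
    exact Fin.ext (Nat.eq_of_dist_eq_zero (by exact_mod_cast h0.symm))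
  · have hab : (a : ℕ) + 1 = b := hab
    show D (g a) (g b)
    rw [← hab]
    exact hg a (by omega)
  · have h1 := hdist a b
    rw [edist_eq_one_iff_adj.2 ((hadj _ _).2 (.inl hab))] at h1
    have h1 : Nat.dist a b = 1 := by exact_mod_cast h1.symm
    simp only [dirPath]
    by_contra hne
    have hba : (b : ℕ) + 1 = a := by simp only [Nat.dist] at h1; omega
    refine hasymm (g a) (g b) ⟨hab, ?_⟩
    rw [← hba]
    exact hg b (by omega)
  · rw [fromRel_dirPath, edist_pathGraph, hdist]

theorem stmt7_general (n : ℕ) (hn : 1 ≤ n) (V : Type) (G : SimpleGraph V)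
    (hchi : (n : ℕ∞) ≤ G.chromaticNumber)
    (hgirth : ((2 * n - 2 : ℕ) : ℕ∞) ≤ G.egirth) :
    IsoRamseyArrow G (dirPath n) := by
  intro D hD
  obtain ⟨g, hg⟩ := exists_rel_chain_of_le_chromaticNumber (fun u v => (hD.2 u v).1)
    (k := n - 1) (by rwa [Nat.sub_add_cancel hn])
  refine exists_dirPath_copy_of_edist_eq hD hg fun a b =>
    edist_eq_dist_of_nonbacktracking (L := n - 1) (fun i hi => ?_) (fun i hi heq => ?_) ?_
      (by omega) (by omega)
  · exact (hD.2 _ _).2 (.inl (hg i hi))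
  · exact hD.1 _ _ ⟨hg (i + 1) (by omega), heq ▸ hg i (by omega)⟩
  · rwa [Nat.mul_sub_one]

theorem stmt7 (n : ℕ) (hn : 1 ≤ n) (V : Type) [Fintype V] (G : SimpleGraph V)
    (hchi : (n : ℕ∞) ≤ G.chromaticNumber)
    (hgirth : ((2 * n - 2 : ℕ) : ℕ∞) ≤ G.egirth) :
    IsoRamseyArrow G (dirPath n) :=
  stmt7_general n hn V G hchi hgirth
end

section
/- For every ε ∈ (0,1) there exists n_ε ∈ ℕ such that for every n ≥ n_ε there is a finite simple graph G with at most (4e(1+ε)·n²·ln n)^n vertices satisfying G ⇒ T_n; that is, IR(T_n) ≤ (4e(1+ε)·n²·ln n)^n for all n ≥ n_ε. -/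
/-- `G ⇒ 𝒯ₙ` : `G ⇒ T` for every oriented tree `T` on `n` vertices. -/
def IsoRamseyArrowTrees {V : Type*} (G : SimpleGraph V) (n : ℕ) : Prop :=
  ∀ (W : Type) (_ : Fintype W), Fintype.card W = n →
    ∀ E : W → W → Prop, IsOrientedTree E → IsoRamseyArrow G E

open Finset Function
open scoped symmDiff

/-!
Every oriented tree `T` on `n` vertices embeds isometrically, with its orientation, into any
orientation of the Hamming graph on `[n]ⁿ`, so `IR(Tₙ) ≤ nⁿ`, which is below the stated bound.

Root `T` at `r` and give each vertex `x` its own coordinate `σ x`. A vertex `v` is placed at the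
word obtained from a base word `w₀` by changing the letter at `σ x` for every ancestor `x ≠ r`
of `v`. Two such placements differ exactly at the coordinates of `anc u ∆ anc v`, whose size is
the tree distance, so the placement is isometric whatever letters are chosen; the letters must be
chosen so that every tree edge gets its orientation. Call `w` embeddable for `v` if each child `c`
of `v` has a new letter at `σ c` giving a correctly oriented edge and a word embeddable for `c`.
The words that differ from a given one only at coordinate `j` form a clique, which the orientation
turns into a tournament, so on each such line at most one embeddable word for `c` has no
correctly oriented embeddable neighbour. Counting lines, at most `(#subtree(v) - 1) nⁿ⁻¹ < nⁿ`
words are not embeddable for `v`, and the root has an embeddable word.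
-/

theorem Finset.card_symmDiff_lt_of_symmDiff_eq_singleton {α : Type*} [DecidableEq α]
    {s t u : Finset α} {a : α} (h : s ∆ t = {a}) (ha : a ∈ t ∆ u) : #(s ∆ u) < #(t ∆ u) := by
  have : s ∆ u = (t ∆ u).erase a := by
    rw [← symmDiff_symmDiff_cancel_left t u, ← symmDiff_assoc, h, symmDiff_symmDiff_cancel_left]
    ext x
    by_cases hx : x = a <;> simp [mem_symmDiff, hx, ha]
  exact this ▸ card_erase_lt_of_mem ha

section hamming

variable {ι α : Type*} [Fintype ι] [DecidableEq ι] [DecidableEq α]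

theorem hammingDist_update_of_ne {w : ι → α} {j : ι} {a : α} (ha : a ≠ w j) :
    hammingDist w (update w j a) = 1 := by
  rw [hammingDist, card_eq_one]
  refine ⟨j, ?_⟩
  ext i
  by_cases hi : i = j
  · subst hi; simp [Ne.symm ha]
  · simp [hi]

theorem hammingDist_update_lt {x z : ι → α} {i : ι} (hi : x i ≠ z i) :
    hammingDist (update x i (z i)) z < hammingDist x z := by
  have : ({k | update x i (z i) k ≠ z k} : Finset ι) = ({k | x k ≠ z k} : Finset ι).erase i := by
    ext k
    by_cases hk : k = i
    · subst hk; simp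
    · simp [hk]
  rw [hammingDist, hammingDist, this]
  exact card_erase_lt_of_mem (by simpa using hi)

end hamming

open scoped Classical in
theorem card_not_exists_update_le {ι α : Type*} [Fintype ι] [DecidableEq ι] [Fintype α]
    [DecidableEq α] (R : (ι → α) → (ι → α) → Prop)
    (hR : ∀ w w', hammingDist w w' = 1 → R w w' ∨ R w' w) (j : ι) (P : (ι → α) → Prop) :
    #{w | ¬∃ a ≠ w j, R w (update w j a) ∧ P (update w j a)} ≤
      #{w | ¬P w} + Fintype.card α ^ (Fintype.card ι - 1) := by
  set F : Finset (ι → α) := {w | ¬∃ a ≠ w j, R w (update w j a) ∧ P (update w j a)}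
  have hsplit : F ⊆ ({w | ¬P w} : Finset (ι → α)) ∪ F.filter P := by
    intro w hw
    by_cases h : P w <;> simp [h, hw]
  -- Two words of `F` satisfying `P` on one line would be `R`-related one way or the other.
  have hinj : Set.InjOn (fun (w : ι → α) (i : {i // i ≠ j}) => w i) (F.filter P : Set _) := by
    intro w₁ hw₁ w₂ hw₂ heq
    simp only [coe_filter, F, mem_filter, mem_univ, true_and, not_exists, not_and] at hw₁ hw₂
    have hupd : ∀ {x y : ι → α}, (∀ i ≠ j, x i = y i) → update x j (y j) = y := fun h =>
      update_eq_iff.2 ⟨rfl, h⟩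
    have hoff : ∀ i ≠ j, w₁ i = w₂ i := fun i hi => congrFun heq ⟨i, hi⟩
    by_contra hne
    have hj : w₂ j ≠ w₁ j := fun h => hne (by rw [← hupd hoff, h, update_eq_self])
    rcases hR w₁ w₂ (hupd hoff ▸ hammingDist_update_of_ne hj) with h | h
    · exact hw₁.1 _ hj (by rwa [hupd hoff]) (by rw [hupd hoff]; exact hw₂.2)
    · have hoff' : ∀ i ≠ j, w₂ i = w₁ i := fun i hi => (hoff i hi).symm
      exact hw₂.1 _ hj.symm (by rwa [hupd hoff']) (by rw [hupd hoff']; exact hw₁.2)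
  calc #F ≤ #{w | ¬P w} + #(F.filter P) := (card_le_card hsplit).trans (card_union_le _ _)
    _ ≤ #{w | ¬P w} + Fintype.card ({i // i ≠ j} → α) :=
        add_le_add_right (card_le_card_of_injOn _ (fun _ _ => mem_univ _) hinj) _
    _ = _ := by simp [Fintype.card_subtype_compl]

namespace SimpleGraph

variable {V : Type*} {G : SimpleGraph V}

theorem edist_eq_of_adj_le_add_one_of_exists_adj_lt (d : V → V → ℕ) (hself : ∀ v, d v v = 0)
    (hadj : ∀ u v w, G.Adj u v → d u w ≤ d v w + 1)
    (hdesc : ∀ u w, u ≠ w → ∃ v, G.Adj u v ∧ d v w < d u w) (u w : V) :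
    G.edist u w = d u w := by
  refine le_antisymm ?_ ?_
  · induction hd : d u w using Nat.strong_induction_on generalizing u with
    | _ N ih =>
      obtain rfl | huw := eq_or_ne u w
      · simp
      obtain ⟨v, huv, hlt⟩ := hdesc u w huw
      calc G.edist u w ≤ G.edist u v + G.edist v w := G.edist_triangle
        _ ≤ 1 + d v w := add_le_add (edist_eq_one_iff_adj.2 huv).le (ih _ (hd ▸ hlt) v rfl)
        _ ≤ N := by norm_cast; omega
  · have hwalk : ∀ {u} (p : G.Walk u w), d u w ≤ p.length := by
      intro u p
      induction p with
      | nil => simp [hself]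
      | cons h p ih => simpa using (hadj _ _ _ h).trans (Nat.add_le_add_right ih 1)
    rw [edist_eq_sInf]
    exact le_sInf (by rintro _ ⟨p, rfl⟩; exact Nat.cast_le.2 (hwalk p))

namespace IsTree

variable (hG : G.IsTree) (r : V)

noncomputable def rootPath (v : V) : G.Walk r v := (hG.existsUnique_path r v).choose

theorem isPath_rootPath (v : V) : (hG.rootPath r v).IsPath :=
  (hG.existsUnique_path r v).choose_spec.1

variable {r} in
theorem eq_rootPath {v : V} {p : G.Walk r v} (hp : p.IsPath) : p = hG.rootPath r v :=
  (hG.existsUnique_path r v).choose_spec.2 p hp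

noncomputable def parent (v : V) : V := (hG.rootPath r v).penultimate

noncomputable def ancestors [DecidableEq V] (v : V) : Finset V :=
  (hG.rootPath r v).support.toFinset

variable {r}

theorem rootPath_root : hG.rootPath r r = Walk.nil :=
  (hG.eq_rootPath Walk.IsPath.nil).symm

theorem adj_parent {v : V} (hv : v ≠ r) : G.Adj (hG.parent r v) v :=
  Walk.adj_penultimate (Walk.not_nil_of_ne hv.symm)

theorem rootPath_eq_concat {v : V} (hv : v ≠ r) :
    hG.rootPath r v = (hG.rootPath r (hG.parent r v)).concat (hG.adj_parent hv) := by
  have h := hG.eq_rootPath (hG.isPath_rootPath r v).dropLast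
  conv_lhs => rw [← Walk.concat_dropLast (hG.adj_parent hv)]
  simp only [parent] at h ⊢
  rw [h]

theorem length_rootPath_parent {v : V} (hv : v ≠ r) :
    (hG.rootPath r v).length = (hG.rootPath r (hG.parent r v)).length + 1 := by
  rw [hG.rootPath_eq_concat hv, Walk.length_concat]

variable (r) in
theorem parent_induction {P : V → Prop} (root : P r)
    (step : ∀ v, v ≠ r → P (hG.parent r v) → P v) (v : V) : P v := by
  induction hd : (hG.rootPath r v).length using Nat.strong_induction_on generalizing v with
  | _ N ih =>
    obtain rfl | hv := eq_or_ne v r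
    · exact root
    · exact step v hv (ih _ (by rw [← hd, hG.length_rootPath_parent hv]; omega) _ rfl)

theorem parent_eq_of_rootPath_eq_concat {u v : V} {h : G.Adj u v}
    (huv : hG.rootPath r v = (hG.rootPath r u).concat h) : v ≠ r ∧ hG.parent r v = u := by
  refine ⟨?_, by rw [parent, huv, Walk.penultimate_concat]⟩
  rintro rfl
  simpa [hG.rootPath_root] using congrArg Walk.length huv

variable (r) in
theorem adj_iff {u v : V} : G.Adj u v ↔
    (v ≠ r ∧ hG.parent r v = u) ∨ (u ≠ r ∧ hG.parent r u = v) := by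
  refine ⟨fun h => ?_, ?_⟩
  · have hp := hG.isPath_rootPath r u
    have hq := hG.isPath_rootPath r v
    by_cases hu : u ∈ (hG.rootPath r v).support
    · exact .inl (hG.parent_eq_of_rootPath_eq_concat (hG.isAcyclic.path_concat hp hq h hu))
    · have hv := hG.isAcyclic.mem_support_of_ne_mem_support_of_adj_of_isPath hp hq h hu
      exact .inr (hG.parent_eq_of_rootPath_eq_concat (hG.isAcyclic.path_concat hq hp h.symm hv))
  · rintro (⟨hv, rfl⟩ | ⟨hu, rfl⟩)
    · exact hG.adj_parent hv
    · exact (hG.adj_parent hu).symm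

section ancestors

variable [DecidableEq V]

theorem mem_ancestors {x v : V} : x ∈ hG.ancestors r v ↔ x ∈ (hG.rootPath r v).support :=
  List.mem_toFinset

theorem mem_ancestors_self (v : V) : v ∈ hG.ancestors r v :=
  hG.mem_ancestors.2 (Walk.end_mem_support _)

theorem root_mem_ancestors (v : V) : r ∈ hG.ancestors r v :=
  hG.mem_ancestors.2 (Walk.start_mem_support _)

theorem ancestors_root : hG.ancestors r r = {r} := by
  simp [ancestors, hG.rootPath_root]

theorem ancestors_eq_insert_parent {v : V} (hv : v ≠ r) :
    hG.ancestors r v = insert v (hG.ancestors r (hG.parent r v)) := by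
  ext x
  simp [ancestors, hG.rootPath_eq_concat hv]

theorem notMem_ancestors_parent {v : V} (hv : v ≠ r) : v ∉ hG.ancestors r (hG.parent r v) := by
  have h := (hG.isPath_rootPath r v).support_nodup
  rw [hG.rootPath_eq_concat hv, Walk.support_concat, List.nodup_append] at h
  exact fun hv' => h.2.2 v (hG.mem_ancestors.1 hv') v (by simp) rfl

theorem parent_mem_ancestors {v : V} (hv : v ≠ r) : hG.parent r v ∈ hG.ancestors r v := by
  rw [hG.ancestors_eq_insert_parent hv]
  exact mem_insert_of_mem (hG.mem_ancestors_self _)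

theorem symmDiff_ancestors_parent {v : V} (hv : v ≠ r) :
    hG.ancestors r v ∆ hG.ancestors r (hG.parent r v) = {v} := by
  rw [hG.ancestors_eq_insert_parent hv]
  ext x
  by_cases hx : x = v
  · subst hx; simp [mem_symmDiff, hG.notMem_ancestors_parent hv]
  · simp [mem_symmDiff, hx]

theorem support_rootPath_prefix {x v : V} (h : x ∈ hG.ancestors r v) :
    (hG.rootPath r x).support <+: (hG.rootPath r v).support := by
  have hx := hG.mem_ancestors.1 h
  refine ⟨((hG.rootPath r v).dropUntil x hx).support.tail, ?_⟩
  rw [← hG.eq_rootPath ((hG.isPath_rootPath r v).takeUntil hx), ← Walk.support_append,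
    Walk.take_spec]

theorem ancestors_subset_ancestors {x v : V} (h : x ∈ hG.ancestors r v) :
    hG.ancestors r x ⊆ hG.ancestors r v := fun _ hy =>
  hG.mem_ancestors.2 ((hG.support_rootPath_prefix h).subset (hG.mem_ancestors.1 hy))

theorem mem_ancestors_or_mem_ancestors {x y v : V} (hx : x ∈ hG.ancestors r v)
    (hy : y ∈ hG.ancestors r v) : x ∈ hG.ancestors r y ∨ y ∈ hG.ancestors r x := by
  have px := hG.support_rootPath_prefix hx
  have py := hG.support_rootPath_prefix hy
  rcases le_total (hG.rootPath r x).support.length (hG.rootPath r y).support.length with h | h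
  · exact .inl (hG.mem_ancestors.2 ((List.prefix_of_prefix_length_le px py h).subset
      (Walk.end_mem_support _)))
  · exact .inr (hG.mem_ancestors.2 ((List.prefix_of_prefix_length_le py px h).subset
      (Walk.end_mem_support _)))

theorem exists_parent_eq_of_mem_ancestors {u v : V} (hu : u ∈ hG.ancestors r v) (huv : u ≠ v) :
    ∃ c ∈ hG.ancestors r v, c ≠ r ∧ hG.parent r c = u := by
  induction v using hG.parent_induction r with
  | root => simp_all [hG.ancestors_root]
  | step v hv ih =>
    by_cases hpu : hG.parent r v = u
    · exact ⟨v, hG.mem_ancestors_self v, hv, hpu⟩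
    · rw [hG.ancestors_eq_insert_parent hv, mem_insert] at hu
      obtain ⟨c, hc, hcr, hpc⟩ := ih (hu.resolve_left huv) (Ne.symm hpu)
      exact ⟨c, hG.ancestors_subset_ancestors (hG.parent_mem_ancestors hv) hc, hcr, hpc⟩

variable (r) in
theorem edist_eq_card_symmDiff_ancestors (u v : V) :
    G.edist u v = #(hG.ancestors r u ∆ hG.ancestors r v) := by
  have hadj : ∀ {x y : V}, G.Adj x y → ∃ a, hG.ancestors r x ∆ hG.ancestors r y = {a} := by
    intro x y h
    rcases (hG.adj_iff r).1 h with ⟨hy, rfl⟩ | ⟨hx, rfl⟩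
    · exact ⟨y, by rw [symmDiff_comm, hG.symmDiff_ancestors_parent hy]⟩
    · exact ⟨x, hG.symmDiff_ancestors_parent hx⟩
  refine edist_eq_of_adj_le_add_one_of_exists_adj_lt
    (fun x y => #(hG.ancestors r x ∆ hG.ancestors r y)) (by simp) (fun x y z h => ?_) ?_ u v
  · obtain ⟨a, ha⟩ := hadj h
    calc #(hG.ancestors r x ∆ hG.ancestors r z)
        ≤ #(hG.ancestors r x ∆ hG.ancestors r y ∪ hG.ancestors r y ∆ hG.ancestors r z) :=
          card_le_card (symmDiff_triangle _ _ _)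
      _ ≤ _ := (card_union_le _ _).trans (by rw [ha, card_singleton, add_comm])
  · intro x z hxz
    by_cases hx : x ∈ hG.ancestors r z
    · obtain ⟨c, hcz, hcr, rfl⟩ := hG.exists_parent_eq_of_mem_ancestors hx hxz
      refine ⟨c, hG.adj_parent hcr, card_symmDiff_lt_of_symmDiff_eq_singleton
        (hG.symmDiff_ancestors_parent hcr) ?_⟩
      simp [mem_symmDiff, hcz, hG.notMem_ancestors_parent hcr]
    · have hxr : x ≠ r := fun h => hx (h ▸ hG.root_mem_ancestors z)
      refine ⟨_, (hG.adj_parent hxr).symm, card_symmDiff_lt_of_symmDiff_eq_singleton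
        (by rw [symmDiff_comm, hG.symmDiff_ancestors_parent hxr]) ?_⟩
      simp [mem_symmDiff, hx, hG.mem_ancestors_self]

end ancestors

section descendants

variable [Fintype V] [DecidableEq V]

variable (r) in
noncomputable def descendants (v : V) : Finset V := {x | v ∈ hG.ancestors r x}

variable (r) in
noncomputable def children (v : V) : Finset V := {c | c ≠ r ∧ hG.parent r c = v}

theorem mem_descendants {x v : V} : x ∈ hG.descendants r v ↔ v ∈ hG.ancestors r x := by
  simp [descendants]

theorem mem_children {c v : V} : c ∈ hG.children r v ↔ c ≠ r ∧ hG.parent r c = v := by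
  simp [children]

theorem self_mem_descendants (v : V) : v ∈ hG.descendants r v :=
  hG.mem_descendants.2 (hG.mem_ancestors_self v)

theorem descendants_root : hG.descendants r r = univ := by
  ext x
  simp [mem_descendants, hG.root_mem_ancestors]

theorem descendants_subset_erase {c v : V} (hc : c ∈ hG.children r v) :
    hG.descendants r c ⊆ (hG.descendants r v).erase v := by
  obtain ⟨hcr, rfl⟩ := hG.mem_children.1 hc
  intro x hx
  rw [mem_descendants] at hx
  refine mem_erase.2 ⟨?_, hG.mem_descendants.2
    (hG.ancestors_subset_ancestors hx (hG.parent_mem_ancestors hcr))⟩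
  rintro rfl
  exact hG.notMem_ancestors_parent hcr hx

theorem card_descendants_lt {c v : V} (hc : c ∈ hG.children r v) :
    #(hG.descendants r c) < #(hG.descendants r v) :=
  (card_le_card (hG.descendants_subset_erase hc)).trans_lt
    (card_erase_lt_of_mem (hG.self_mem_descendants v))

theorem pairwiseDisjoint_descendants (v : V) :
    (hG.children r v : Set V).PairwiseDisjoint (hG.descendants r) := by
  intro c₁ hc₁ c₂ hc₂ hne
  show Disjoint _ _
  obtain ⟨hr₁, hp₁⟩ := hG.mem_children.1 hc₁
  obtain ⟨hr₂, hp₂⟩ := hG.mem_children.1 hc₂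
  refine Finset.disjoint_left.2 fun x hx₁ hx₂ => ?_
  rcases hG.mem_ancestors_or_mem_ancestors (hG.mem_descendants.1 hx₁)
    (hG.mem_descendants.1 hx₂) with h | h
  · rw [hG.ancestors_eq_insert_parent hr₂, hp₂, ← hp₁, mem_insert] at h
    exact hG.notMem_ancestors_parent hr₁ (h.resolve_left hne)
  · rw [hG.ancestors_eq_insert_parent hr₁, hp₁, ← hp₂, mem_insert] at h
    exact hG.notMem_ancestors_parent hr₂ (h.resolve_left hne.symm)

theorem sum_card_descendants_children_le (v : V) :
    ∑ c ∈ hG.children r v, #(hG.descendants r c) ≤ #(hG.descendants r v) - 1 := by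
  rw [← card_biUnion (hG.pairwiseDisjoint_descendants v),
    ← card_erase_of_mem (hG.self_mem_descendants v)]
  exact card_le_card (biUnion_subset.2 fun c hc => hG.descendants_subset_erase hc)

end descendants

end IsTree

section hammingGraph

variable {ι α : Type*} [Fintype ι] [DecidableEq α]

variable (ι α) in
def hammingGraph : SimpleGraph (ι → α) where
  Adj u v := hammingDist u v = 1
  symm := ⟨fun u v h => by rwa [hammingDist_comm]⟩
  loopless := ⟨fun u h => by simp at h⟩

@[simp]
theorem hammingGraph_adj {u v : ι → α} : (hammingGraph ι α).Adj u v ↔ hammingDist u v = 1 :=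
  Iff.rfl

theorem edist_hammingGraph (u v : ι → α) :
    (hammingGraph ι α).edist u v = hammingDist u v := by
  classical
  refine edist_eq_of_adj_le_add_one_of_exists_adj_lt _ hammingDist_self
    (fun x y z h => ?_) (fun x z hxz => ?_) u v
  · have := hammingDist_triangle x y z
    rw [hammingGraph_adj.1 h] at this
    omega
  · obtain ⟨i, hi⟩ := Function.ne_iff.1 hxz
    exact ⟨update x i (z i), hammingDist_update_of_ne (Ne.symm hi), hammingDist_update_lt hi⟩

end hammingGraph

end SimpleGraph

namespace SimpleGraph.IsTree

variable {V : Type*} [Fintype V] [DecidableEq V] {G : SimpleGraph V} (hG : G.IsTree) (r : V)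
  {ι α : Type*} [DecidableEq ι] (σ : V ↪ ι) (R : V → (ι → α) → (ι → α) → Prop)

def Embeddable (v : V) (w : ι → α) : Prop :=
  ∀ c ∈ hG.children r v, ∃ a ≠ w (σ c), R c w (update w (σ c) a) ∧ Embeddable c (update w (σ c) a)
termination_by #(hG.descendants r v)
decreasing_by exact hG.card_descendants_lt ‹_›

variable {r σ R}

theorem embeddable_iff {v : V} {w : ι → α} : hG.Embeddable r σ R v w ↔
    ∀ c ∈ hG.children r v, ∃ a ≠ w (σ c), R c w (update w (σ c) a) ∧
      hG.Embeddable r σ R c (update w (σ c) a) := by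
  rw [Embeddable]

variable (r σ R) in
open scoped Classical in
theorem card_not_embeddable_le [Fintype ι] [Fintype α] [DecidableEq α]
    (hR : ∀ c w w', hammingDist w w' = 1 → R c w w' ∨ R c w' w) (v : V) :
    #{w | ¬hG.Embeddable r σ R v w} ≤
      (#(hG.descendants r v) - 1) * Fintype.card α ^ (Fintype.card ι - 1) := by
  set K := Fintype.card α ^ (Fintype.card ι - 1)
  induction hd : #(hG.descendants r v) using Nat.strong_induction_on generalizing v with
  | _ N ih =>
  have hsub : ({w | ¬hG.Embeddable r σ R v w} : Finset (ι → α)) ⊆ (hG.children r v).biUnion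
      fun c => {w | ¬∃ a ≠ w (σ c), R c w (update w (σ c) a) ∧
        hG.Embeddable r σ R c (update w (σ c) a)} := by
    intro w hw
    rw [mem_filter, embeddable_iff] at hw
    push Not at hw
    simpa using hw.2
  have hchild : ∀ c ∈ hG.children r v,
      #{w | ¬∃ a ≠ w (σ c), R c w (update w (σ c) a) ∧ hG.Embeddable r σ R c (update w (σ c) a)}
        ≤ #(hG.descendants r c) * K := by
    intro c hc
    have hpos : 0 < #(hG.descendants r c) := card_pos.2 ⟨c, hG.self_mem_descendants c⟩
    calc _ ≤ _ := card_not_exists_update_le (R c) (hR c) (σ c) (hG.Embeddable r σ R c)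
      _ ≤ (#(hG.descendants r c) - 1) * K + K :=
        Nat.add_le_add_right (ih _ (hd ▸ hG.card_descendants_lt hc) c rfl) K
      _ = _ := by rw [← add_one_mul, Nat.sub_one_add_one hpos.ne']
  calc #{w | ¬hG.Embeddable r σ R v w} ≤ ∑ c ∈ hG.children r v, #(hG.descendants r c) * K :=
        (card_le_card hsub).trans (card_biUnion_le.trans (sum_le_sum hchild))
    _ = (∑ c ∈ hG.children r v, #(hG.descendants r c)) * K := (sum_mul ..).symm
    _ ≤ (N - 1) * K := by gcongr; exact hd ▸ hG.sum_card_descendants_children_le v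

theorem exists_embeddable_root [Fintype ι] [Fintype α] [DecidableEq α]
    (hR : ∀ c w w', hammingDist w w' = 1 → R c w w' ∨ R c w' w)
    (hα : Fintype.card V ≤ Fintype.card α) : ∃ w, hG.Embeddable r σ R r w := by
  classical
  by_contra! h
  have hbound := hG.card_not_embeddable_le r σ R hR r
  obtain ⟨m, hm⟩ := Nat.exists_eq_add_one.2 (Fintype.card_pos_iff.2 ⟨σ r⟩)
  have hV : 0 < Fintype.card V := Fintype.card_pos_iff.2 ⟨r⟩
  simp only [h, not_false_eq_true, filter_true, card_univ, Fintype.card_fun,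
    hG.descendants_root, hm, Nat.add_sub_cancel, pow_succ'] at hbound
  have := Nat.le_of_mul_le_mul_right hbound (pow_pos (hV.trans_le hα) _)
  omega

variable {w₀ : ι → α}

-- The fallback branches are never taken from an embeddable root word
-- (`embed_of_embeddable_parent`).
variable (r σ R w₀) in
open Classical in
noncomputable def embed (v : V) : ι → α :=
  if _ : v = r then w₀ else
    let w := embed (hG.parent r v)
    update w (σ v) (if h : ∃ a ≠ w (σ v), R v w (update w (σ v) a) ∧
      hG.Embeddable r σ R v (update w (σ v) a) then h.choose else w (σ v))
termination_by (hG.rootPath r v).length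
decreasing_by exact (hG.length_rootPath_parent ‹¬v = r›).symm ▸ Nat.lt_add_one _

variable (r σ R w₀) in
theorem embed_root : hG.embed r σ R w₀ r = w₀ := by
  rw [embed, dif_pos rfl]

theorem embed_of_embeddable_parent {v : V} (hv : v ≠ r)
    (hw : hG.Embeddable r σ R (hG.parent r v) (hG.embed r σ R w₀ (hG.parent r v))) :
    ∃ a ≠ hG.embed r σ R w₀ (hG.parent r v) (σ v),
      hG.embed r σ R w₀ v = update (hG.embed r σ R w₀ (hG.parent r v)) (σ v) a ∧
      R v (hG.embed r σ R w₀ (hG.parent r v)) (hG.embed r σ R w₀ v) ∧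
      hG.Embeddable r σ R v (hG.embed r σ R w₀ v) := by
  have h := hG.embeddable_iff.1 hw v (hG.mem_children.2 ⟨hv, rfl⟩)
  obtain ⟨ha, hR, hE⟩ := h.choose_spec
  have he : hG.embed r σ R w₀ v =
      update (hG.embed r σ R w₀ (hG.parent r v)) (σ v) h.choose := by
    rw [embed, dif_neg hv]
    simp only [dif_pos h]
  exact ⟨h.choose, ha, he, he ▸ hR, he ▸ hE⟩

theorem embeddable_embed (hw₀ : hG.Embeddable r σ R r w₀) (v : V) :
    hG.Embeddable r σ R v (hG.embed r σ R w₀ v) := by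
  induction v using hG.parent_induction r with
  | root => rwa [embed_root]
  | step v hv ih => exact (hG.embed_of_embeddable_parent hv ih).choose_spec.2.2.2

theorem embed_parent (hw₀ : hG.Embeddable r σ R r w₀) {v : V} (hv : v ≠ r) :
    ∃ a ≠ hG.embed r σ R w₀ (hG.parent r v) (σ v),
      hG.embed r σ R w₀ v = update (hG.embed r σ R w₀ (hG.parent r v)) (σ v) a ∧
      R v (hG.embed r σ R w₀ (hG.parent r v)) (hG.embed r σ R w₀ v) :=
  let ⟨a, ha, he, hR, _⟩ := hG.embed_of_embeddable_parent hv (hG.embeddable_embed hw₀ _)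
  ⟨a, ha, he, hR⟩

theorem embed_apply_of_mem_ancestors (hw₀ : hG.Embeddable r σ R r w₀) {x v : V}
    (hx : x ∈ hG.ancestors r v) : hG.embed r σ R w₀ v (σ x) = hG.embed r σ R w₀ x (σ x) := by
  induction v using hG.parent_induction r with
  | root => rw [hG.ancestors_root, mem_singleton] at hx; rw [hx]
  | step v hv ih =>
    obtain ⟨a, -, he, -⟩ := hG.embed_parent hw₀ hv
    rw [hG.ancestors_eq_insert_parent hv, mem_insert] at hx
    rcases hx with rfl | hx
    · rfl
    · rw [he, update_of_ne (σ.injective.ne (ne_of_mem_of_not_mem hx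
        (hG.notMem_ancestors_parent hv))), ih hx]

theorem embed_apply_of_notMem (hw₀ : hG.Embeddable r σ R r w₀) {i : ι} {v : V}
    (hi : i ∉ (hG.ancestors r v).map σ) : hG.embed r σ R w₀ v i = w₀ i := by
  induction v using hG.parent_induction r with
  | root => rw [embed_root]
  | step v hv ih =>
    obtain ⟨a, -, he, -⟩ := hG.embed_parent hw₀ hv
    rw [hG.ancestors_eq_insert_parent hv, map_insert, mem_insert, not_or] at hi
    rw [he, update_of_ne hi.1, ih hi.2]

theorem embed_apply_self_ne (hw₀ : hG.Embeddable r σ R r w₀) {x : V} (hx : x ≠ r) :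
    hG.embed r σ R w₀ x (σ x) ≠ w₀ (σ x) := by
  obtain ⟨a, ha, he, -⟩ := hG.embed_parent hw₀ hx
  rwa [he, update_self, ← hG.embed_apply_of_notMem hw₀ (v := hG.parent r x)
    (by simpa using hG.notMem_ancestors_parent hx)]

theorem hammingDist_embed [Fintype ι] [DecidableEq α] (hw₀ : hG.Embeddable r σ R r w₀)
    (u v : V) :
    hammingDist (hG.embed r σ R w₀ u) (hG.embed r σ R w₀ v) =
      #(hG.ancestors r u ∆ hG.ancestors r v) := by
  have hσ : ∀ v x, hG.embed r σ R w₀ v (σ x) =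
      if x ∈ hG.ancestors r v then hG.embed r σ R w₀ x (σ x) else w₀ (σ x) := by
    intro v x
    split_ifs with hx
    · exact hG.embed_apply_of_mem_ancestors hw₀ hx
    · exact hG.embed_apply_of_notMem hw₀ (by simpa using hx)
  rw [hammingDist, ← card_map σ]
  congr 1
  ext i
  by_cases hi : i ∈ Set.range σ
  · obtain ⟨x, rfl⟩ := hi
    rw [mem_filter, hσ u, hσ v, mem_map', mem_symmDiff]
    obtain rfl | hxr := eq_or_ne x r
    · simp [hG.root_mem_ancestors]
    · have := hG.embed_apply_self_ne hw₀ hxr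
      clear hσ
      split_ifs <;> simp_all [Ne.symm this]
  · have hi' : ∀ s : Finset V, i ∉ s.map σ := fun s h => hi (by
      obtain ⟨x, -, rfl⟩ := mem_map.1 h
      exact Set.mem_range_self x)
    simp only [mem_filter, mem_univ, true_and, hG.embed_apply_of_notMem hw₀ (hi' _), ne_eq,
      not_true_eq_false, false_iff]
    exact hi' _

end SimpleGraph.IsTree

open SimpleGraph

theorem IsOrientation.iff_of_edist_eq_of_parent {V W : Type*} {G : SimpleGraph V}
    {D : V → V → Prop} (hD : IsOrientation G D) {E : W → W → Prop} (hE : IsDigraph E)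
    (hT : (fromRel E).IsTree) (r : W) {f : W → V}
    (hf : ∀ u v, (fromRel E).edist u v = G.edist (f u) (f v))
    (hpar : ∀ c ≠ r, E (hT.parent r c) c ↔ D (f (hT.parent r c)) (f c)) (u v : W) :
    E u v ↔ D (f u) (f v) := by
  have hadj : (fromRel E).Adj u v ↔ G.Adj (f u) (f v) := by
    rw [← edist_eq_one_iff_adj, ← edist_eq_one_iff_adj, hf]
  have hDuv := hD.1 (f u) (f v)
  have hEuv := hE u v
  by_cases h : (fromRel E).Adj u v
  · have hD' := (hD.2 _ _).1 (hadj.1 h)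
    rcases (hT.adj_iff r).1 h with ⟨hv, rfl⟩ | ⟨hu, rfl⟩
    · exact hpar v hv
    · have := hpar u hu
      rw [fromRel_adj] at h
      tauto
  · have hnE : ¬E u v := fun he => h (fromRel_adj _ _ _ |>.2
      ⟨fun huv => hE u u ⟨huv ▸ he, huv ▸ he⟩, .inl he⟩)
    have hnD : ¬D (f u) (f v) := fun hd => h (hadj.2 ((hD.2 _ _).2 (.inl hd)))
    tauto

theorem isoRamseyArrow_hammingGraph {W ι α : Type*} [Fintype W] [Fintype ι] [DecidableEq ι]
    [Fintype α] [DecidableEq α] {E : W → W → Prop} (hE : IsOrientedTree E)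
    (hι : Fintype.card W ≤ Fintype.card ι) (hα : Fintype.card W ≤ Fintype.card α) :
    IsoRamseyArrow (hammingGraph ι α) E := by
  classical
  intro D hD
  obtain ⟨hE, hT⟩ := hE
  obtain ⟨r⟩ := hT.connected.nonempty
  obtain ⟨σ⟩ := Function.Embedding.nonempty_of_card_le hι
  set R : W → (ι → α) → (ι → α) → Prop := fun c w w' => E (hT.parent r c) c ↔ D w w'
  have hR : ∀ c w w', hammingDist w w' = 1 → R c w w' ∨ R c w' w := fun c w w' h => by
    have := (hD.2 w w').1 h
    have := hD.1 w w'
    simp only [R]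
    tauto
  obtain ⟨w₀, hw₀⟩ := hT.exists_embeddable_root hR hα (r := r) (σ := σ)
  have hdist : ∀ u v, (fromRel E).edist u v =
      (hammingGraph ι α).edist (hT.embed r σ R w₀ u) (hT.embed r σ R w₀ v) := fun u v => by
    rw [edist_hammingGraph, hT.hammingDist_embed hw₀, hT.edist_eq_card_symmDiff_ancestors r]
  refine ⟨hT.embed r σ R w₀, fun u v huv => ?_, hD.iff_of_edist_eq_of_parent hE hT r hdist
    fun c hc => ?_, hdist⟩
  · rw [← edist_eq_zero_iff, hdist, huv, SimpleGraph.edist_self]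
  · obtain ⟨-, -, -, h⟩ := hT.embed_parent hw₀ hc
    exact h

theorem natCast_le_four_mul_exp_one_mul_sq_mul_log {ε : ℝ} (hε : 0 ≤ ε) {n : ℕ} (hn : 2 ≤ n) :
    (n : ℝ) ≤ 4 * Real.exp 1 * (1 + ε) * n ^ 2 * Real.log n := by
  have hn' : (2 : ℝ) ≤ n := by exact_mod_cast hn
  have hlog : 1 / 2 ≤ Real.log n :=
    (Real.log_le_log two_pos hn').trans' (by linarith [Real.log_two_gt_d9])
  have he : 1 ≤ Real.exp 1 * (1 + ε) :=
    one_le_mul_of_one_le_of_one_le (Real.one_le_exp zero_le_one) (by linarith)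
  have hfactor : 1 ≤ 4 * Real.exp 1 * (1 + ε) * Real.log n := by nlinarith
  nlinarith

theorem stmt11 (ε : ℝ) (hε : 0 < ε ∧ ε < 1) :
    ∃ nε : ℕ, ∀ n : ℕ, nε ≤ n →
      ∃ (V : Type) (_ : Fintype V) (G : SimpleGraph V),
        ((Fintype.card V : ℝ) ≤
          (4 * Real.exp 1 * (1 + ε) * n ^ 2 * Real.log n) ^ n) ∧
        IsoRamseyArrowTrees G n := by
  refine ⟨2, fun n hn => ⟨Fin n → Fin n, inferInstance, hammingGraph (Fin n) (Fin n), ?_, ?_⟩⟩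
  · rw [Fintype.card_fun, Fintype.card_fin, Nat.cast_pow]
    exact pow_le_pow_left₀ n.cast_nonneg
      (natCast_le_four_mul_exp_one_mul_sq_mul_log hε.1.le hn) n
  · intro W _ hW E hE
    exact isoRamseyArrow_hammingGraph hE (by simp [hW]) (by simp [hW])
end

section
/- A finite simple graph G admits a transitive orientation (an orientation D such that whenever (x,y) and (y,z) are edges of D, the pair (x,z) is also an edge of D) if and only if G ⇒ I_3 fails, where I_3 is the directed path on 3 vertices. -/
/-!
An orientation contains an isometric copy of `I₃` exactly when it has arcs `x → y → z` with `x`, `z`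
non-adjacent. A transitive orientation has none, so one direction is immediate, and the other
says that a quasi-transitive orientation (`x → y → z` forces `x ~ z`) can be replaced by a
transitive one (Ghouila-Houri). The key fact is that if a path leads from `x` to a non-adjacent
`y`, then there is an arc `p → q` with `x → p`, `y → p`, `q → x`, `q → y`; in particular `y`
reaches `x` back. We induct on the vertex set. If `D` is not strongly connected, vertices in
different strong components related by reachability are therefore adjacent: orient between
components by reachability and inside them by induction. If `D` is strongly connected with at
least two vertices, the complement of its underlying graph is disconnected, so a co-component
is joined to all other vertices: orient it towards the rest and both parts by induction.
-/
namespace GhouilaHouri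

open Relation

variable {V : Type*} {D : V → V → Prop} {s t : Finset V} {a b u v w x y z : V}

structure IsQuasiTransitive (D : V → V → Prop) : Prop where
  asymm : ∀ ⦃x y⦄, D x y → ¬ D y x
  symmGen_of_rel_of_rel : ∀ ⦃x y z⦄, D x y → D y z → SymmGen D x z

def CoAdj (D : V → V → Prop) (x y : V) : Prop := x ≠ y ∧ ¬ SymmGen D x y

def restrict (s : Finset V) (D : V → V → Prop) (x y : V) : Prop := x ∈ s ∧ y ∈ s ∧ D x y

def SupportedOn (D : V → V → Prop) (s : Finset V) : Prop := ∀ ⦃x y⦄, D x y → x ∈ s ∧ y ∈ s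

def StronglyConnectedOn (D : V → V → Prop) (s : Finset V) : Prop :=
  ∀ x ∈ s, ∀ y ∈ s, ReflTransGen D x y

def CoReachOn (D : V → V → Prop) (s : Finset V) : V → V → Prop :=
  ReflTransGen (restrict s (CoAdj D))

def CoConnectedOn (D : V → V → Prop) (s : Finset V) : Prop := ∀ x ∈ s, ∀ y ∈ s, CoReachOn D s x y

def Bridged (D : V → V → Prop) (x y : V) : Prop :=
  ∃ p q, D p q ∧ D x p ∧ D y p ∧ D q x ∧ D q y

structure IsTransitiveOrientation (T D : V → V → Prop) : Prop where
  symmGen_iff : ∀ x y, SymmGen T x y ↔ SymmGen D x y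
  asymm : ∀ ⦃x y⦄, T x y → ¬ T y x
  trans : ∀ ⦃x y z⦄, T x y → T y z → T x z

lemma symmGen_restrict_iff : SymmGen (restrict s D) x y ↔ x ∈ s ∧ y ∈ s ∧ SymmGen D x y := by
  simp only [SymmGen, restrict]
  tauto

lemma supportedOn_restrict (s : Finset V) (D : V → V → Prop) : SupportedOn (restrict s D) s :=
  fun _ _ h => ⟨h.1, h.2.1⟩

lemma SupportedOn.mem_of_symmGen (hs : SupportedOn D s) (h : SymmGen D x y) : x ∈ s ∧ y ∈ s := by
  rcases h with h | h
  · exact hs h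
  · exact (hs h).symm

lemma CoReachOn.symm (h : CoReachOn D s x y) : CoReachOn D s y x :=
  have : Std.Symm (restrict s (CoAdj D)) :=
    ⟨fun _ _ h => ⟨h.2.1, h.1, h.2.2.1.symm, fun h' => h.2.2.2 h'.symm⟩⟩
  Std.Symm.symm (r := ReflTransGen (restrict s (CoAdj D))) _ _ h

lemma coReachOn_restrict : CoReachOn (restrict t D) t = CoReachOn D t := by
  unfold CoReachOn
  congr 1
  ext x y
  simp only [restrict, CoAdj, symmGen_restrict_iff]
  tauto

lemma IsTransitiveOrientation.mem_of_rel {T : V → V → Prop}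
    (hT : IsTransitiveOrientation T (restrict s D)) (h : T x y) : x ∈ s ∧ y ∈ s :=
  (supportedOn_restrict s D).mem_of_symmGen ((hT.symmGen_iff x y).1 (.of_rel h))

namespace IsQuasiTransitive

variable (hD : IsQuasiTransitive D)
include hD

lemma ne_of_rel (h : D x y) : x ≠ y := by
  rintro rfl
  exact hD.asymm h h

protected lemma restrict (s : Finset V) : IsQuasiTransitive (restrict s D) where
  asymm _ _ h h' := hD.asymm h.2.2 h'.2.2
  symmGen_of_rel_of_rel _ _ _ h h' :=
    symmGen_restrict_iff.2 ⟨h.1, h'.2.1, hD.symmGen_of_rel_of_rel h.2.2 h'.2.2⟩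

lemma rel_of_rel_of_not_symmGen (hzx : D z x) (hxy : ¬ SymmGen D x y) (hzy : SymmGen D z y) :
    D z y :=
  hzy.resolve_right fun hyz => hxy (hD.symmGen_of_rel_of_rel hyz hzx).symm

theorem bridged_of_reflTransGen (h : ReflTransGen D x y) (hxy : CoAdj D x y) : Bridged D x y := by
  -- Carried along the path for `a` and its in-neighbours `b`: if `b → a → a'` has no shortcut
  -- `b → a'`, then `a' → b`, and a bridge of `a'` and `y` extends to one of `b` and `y`.
  suffices H : ∀ a, ReflTransGen D a y → ∀ b, ReflGen D b a → CoAdj D b y → Bridged D b y from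
    H x h x .refl hxy
  intro a ha
  induction ha using Relation.ReflTransGen.head_induction_on with
  | refl =>
    rintro b (_ | hby) ⟨hne, hn⟩
    · exact absurd rfl hne
    · exact absurd (.of_rel hby) hn
  | @head a a' haa' _ ih =>
    rintro b (_ | hba) hby
    · exact ih a (.single haa') hby
    obtain hba' | ha'b := hD.symmGen_of_rel_of_rel hba haa'
    · exact ih b (.single hba') hby
    by_cases ha'y : SymmGen D a' y
    · obtain ha'y | hya' := ha'y
      · have hya : D y a := (hD.symmGen_of_rel_of_rel haa' ha'y).resolve_left
          fun hay => hby.2 (hD.symmGen_of_rel_of_rel hba hay)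
        exact ⟨a, a', haa', hba, hya, ha'b, ha'y⟩
      · exact absurd (hD.symmGen_of_rel_of_rel hya' ha'b).symm hby.2
    · have ha'y' : a' ≠ y := by
        rintro rfl
        exact hby.2 (.of_rel_symm ha'b)
      obtain ⟨p, q, hpq, ha'p, hyp, hqa', hqy⟩ := ih a' .refl ⟨ha'y', ha'y⟩
      have hqb : D q b := (hD.symmGen_of_rel_of_rel hqa' ha'b).resolve_right
        fun hbq => hby.2 (hD.symmGen_of_rel_of_rel hbq hqy)
      have hbp : D b p := (hD.symmGen_of_rel_of_rel hpq hqb).resolve_left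
        fun hpb => hby.2 (hD.symmGen_of_rel_of_rel hyp hpb).symm
      exact ⟨p, q, hpq, hbp, hyp, hqb, hqy⟩

theorem reflTransGen_symm_of_coAdj (h : ReflTransGen D x y) (hxy : CoAdj D x y) :
    ReflTransGen D y x := by
  obtain ⟨p, q, hpq, -, hyp, hqx, -⟩ := hD.bridged_of_reflTransGen h hxy
  exact .head hyp (.head hpq (.single hqx))

theorem symmGen_of_reflTransGen (h : ReflTransGen D x y) (h' : ¬ ReflTransGen D y x) :
    SymmGen D x y := by
  by_contra hxy
  have hne : x ≠ y := by
    rintro rfl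
    exact h' .refl
  exact h' (hD.reflTransGen_symm_of_coAdj h ⟨hne, hxy⟩)

end IsQuasiTransitive

lemma CoReachOn.mem (hx : x ∈ s) (h : CoReachOn D s x y) : y ∈ s := by
  induction h with
  | refl => exact hx
  | tail _ hyz _ => exact hyz.2.1

lemma symmGen_of_not_coReachOn (hz : z ∈ s) (hx : x ∈ s) (h : CoReachOn D s x y)
    (hxz : ¬ CoReachOn D s x z) : SymmGen D z y := by
  by_contra hzy
  have hne : z ≠ y := by
    rintro rfl
    exact hxz h
  exact hxz (h.tail ⟨h.mem hx, hz, hne.symm, fun h' => hzy h'.symm⟩)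

namespace IsQuasiTransitive

variable (hD : IsQuasiTransitive D)
include hD

lemma rel_of_coReachOn_of_rel (hz : z ∈ s) (hx : x ∈ s) (hxz : ¬ CoReachOn D s x z)
    (h : CoReachOn D s x y) (hzx : D z x) : D z y := by
  induction h with
  | refl => exact hzx
  | @tail y y' hxy hyy' ih =>
    exact hD.rel_of_rel_of_not_symmGen ih hyy'.2.2.2
      (symmGen_of_not_coReachOn hz hx (hxy.tail hyy') hxz)

lemma rel_of_coReachOn_of_rel' (hz : z ∈ s) (hx : x ∈ s) (hxz : ¬ CoReachOn D s x z)
    (h : CoReachOn D s x y) (hxz' : D x z) : D y z := by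
  refine (symmGen_of_not_coReachOn hz hx h hxz).resolve_left fun hzy => hD.asymm hxz' ?_
  exact hD.rel_of_coReachOn_of_rel hz (h.mem hx) (fun h' => hxz (h.trans h')) h.symm hzy

end IsQuasiTransitive

lemma IsTransitiveOrientation.symmGen_iff_of_supportedOn {T : V → V → Prop}
    (hT : IsTransitiveOrientation T (restrict t D)) (hs : SupportedOn D s)
    (hx : x ∈ s → x ∈ t) (hy : y ∈ s → y ∈ t) : SymmGen T x y ↔ SymmGen D x y := by
  rw [hT.symmGen_iff, symmGen_restrict_iff]
  exact ⟨fun h => h.2.2, fun h => ⟨hx (hs.mem_of_symmGen h).1, hy (hs.mem_of_symmGen h).2, h⟩⟩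

/-- Orient each block `κ x ⊂ s` by induction and pairs in different blocks by `P`. -/
theorem exists_isTransitiveOrientation_of_blocks (hs : SupportedOn D s)
    (ih : ∀ c ⊂ s, ∃ T, IsTransitiveOrientation T (restrict c D))
    (κ : V → Finset V) (hκs : ∀ x, κ x ⊂ s) (hmem : ∀ x ∈ s, x ∈ κ x)
    (hκ : ∀ x, ∀ y ∈ κ x, κ y = κ x) (P : V → V → Prop)
    (hP_asymm : ∀ ⦃x y⦄, P x y → ¬ P y x) (hP_trans : ∀ ⦃x y z⦄, P x y → P y z → P x z)
    (hP_ne : ∀ ⦃x y⦄, P x y → κ x ≠ κ y)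
    (hP_left : ∀ ⦃x y z⦄, x ∈ κ y → P y z → P x z)
    (hP_right : ∀ ⦃x y z⦄, z ∈ κ y → P x y → P x z)
    (hP_symmGen : ∀ x y, κ x ≠ κ y → (SymmGen P x y ↔ SymmGen D x y)) :
    ∃ T, IsTransitiveOrientation T D := by
  have : ∀ c, ∃ T, c ⊂ s → IsTransitiveOrientation T (restrict c D) := fun c => by
    by_cases hc : c ⊂ s
    · exact (ih c hc).imp fun _ hT _ => hT
    · exact ⟨⊥, fun h => absurd h hc⟩
  choose F hF using this
  have hF_mem : ∀ {x y}, F (κ x) x y → x ∈ κ x ∧ y ∈ κ x := fun h => (hF _ (hκs _)).mem_of_rel h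
  have hF_eq : ∀ {x y}, F (κ x) x y → κ y = κ x := fun h => hκ _ _ (hF_mem h).2
  refine ⟨fun x y => P x y ∨ F (κ x) x y, fun x y => ?_, ?_, ?_⟩
  · by_cases hxy : κ x = κ y
    · have hPxy : ¬ P x y := fun h => hP_ne h hxy
      have hPyx : ¬ P y x := fun h => hP_ne h hxy.symm
      simp only [SymmGen, hPxy, hPyx, false_or]
      rw [← hxy]
      exact (hF _ (hκs x)).symmGen_iff_of_supportedOn hs (hmem x) (hxy ▸ hmem y)
    · have hFxy : ¬ F (κ x) x y := fun h => hxy (hF_eq h).symm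
      have hFyx : ¬ F (κ y) y x := fun h => hxy (hF_eq h)
      simp only [SymmGen, hFxy, hFyx, or_false]
      exact hP_symmGen x y hxy
  · rintro x y (hxy | hxy) (hyx | hyx)
    · exact hP_asymm hxy hyx
    · exact hP_ne hxy (hF_eq hyx)
    · exact hP_ne hyx (hF_eq hxy)
    · exact (hF _ (hκs x)).asymm hxy (hF_eq hxy ▸ hyx)
  · rintro x y z (hxy | hxy) (hyz | hyz)
    · exact .inl (hP_trans hxy hyz)
    · exact .inl (hP_right (hF_mem hyz).2 hxy)
    · exact .inl (hP_left (hF_eq hxy ▸ (hF_mem hxy).1) hyz)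
    · exact .inr ((hF _ (hκs x)).trans hxy (hF_eq hxy ▸ hyz))

theorem IsQuasiTransitive.exists_isTransitiveOrientation_of_not_stronglyConnectedOn
    (hD : IsQuasiTransitive D) (hs : SupportedOn D s) (hst : ¬ StronglyConnectedOn D s)
    (ih : ∀ c ⊂ s, ∃ T, IsTransitiveOrientation T (restrict c D)) :
    ∃ T, IsTransitiveOrientation T D := by
  classical
  obtain ⟨x₀, hx₀, y₀, hy₀, hxy₀⟩ : ∃ x ∈ s, ∃ y ∈ s, ¬ ReflTransGen D x y := by
    simpa [StronglyConnectedOn] using hst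
  let κ x := s.filter fun y => ReflTransGen D x y ∧ ReflTransGen D y x
  have hκ_mem : ∀ {x y}, y ∈ κ x ↔ y ∈ s ∧ ReflTransGen D x y ∧ ReflTransGen D y x :=
    Finset.mem_filter
  have hκ : ∀ x, ∀ y ∈ κ x, κ y = κ x := by
    intro x y hy
    obtain ⟨-, hxy, hyx⟩ := hκ_mem.1 hy
    ext w
    simp only [hκ_mem]
    exact ⟨fun ⟨hw, hyw, hwy⟩ => ⟨hw, hxy.trans hyw, hwy.trans hyx⟩,
      fun ⟨hw, hxw, hwx⟩ => ⟨hw, hyx.trans hxw, hwx.trans hxy⟩⟩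
  have hrel : ∀ {x y}, κ x ≠ κ y → D x y → ¬ ReflTransGen D y x := by
    intro x y hne hxy hyx
    exact hne (hκ x y (hκ_mem.2 ⟨(hs hxy).2, .single hxy, hyx⟩)).symm
  refine exists_isTransitiveOrientation_of_blocks hs ih κ (fun x => ?_)
    (fun x hx => hκ_mem.2 ⟨hx, .refl, .refl⟩) hκ
    (fun x y => x ∈ s ∧ ReflTransGen D x y ∧ ¬ ReflTransGen D y x)
    (fun x y hxy hyx => hxy.2.2 hyx.2.1)
    (fun x y z hxy hyz => ⟨hxy.1, hxy.2.1.trans hyz.2.1, fun hzx => hyz.2.2 (hzx.trans hxy.2.1)⟩)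
    (fun x y hxy hκxy => hxy.2.2 (hκ_mem.1 (hκxy ▸ hκ_mem.2 ⟨hxy.1, .refl, .refl⟩)).2.1)
    (fun x y z hx hyz => ?_) (fun x y z hz hxy => ?_) (fun x y hκxy => ⟨?_, ?_⟩)
  · refine Finset.ssubset_iff_subset_ne.2 ⟨Finset.filter_subset _ _, fun h => hxy₀ ?_⟩
    obtain ⟨-, -, hx₀x⟩ := hκ_mem.1 (h ▸ hx₀)
    obtain ⟨-, hxy₀, -⟩ := hκ_mem.1 (h ▸ hy₀)
    exact hx₀x.trans hxy₀
  · obtain ⟨hx, hyx, hxy⟩ := hκ_mem.1 hx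
    exact ⟨hx, hxy.trans hyz.2.1, fun hzx => hyz.2.2 (hzx.trans hxy)⟩
  · obtain ⟨-, hyz, hzy⟩ := hκ_mem.1 hz
    exact ⟨hxy.1, hxy.2.1.trans hyz, fun hzx => hxy.2.2 (hyz.trans hzx)⟩
  · rintro (⟨-, hxy, hyx⟩ | ⟨-, hyx, hxy⟩)
    · exact hD.symmGen_of_reflTransGen hxy hyx
    · exact (hD.symmGen_of_reflTransGen hyx hxy).symm
  · rintro (hxy | hyx)
    · exact .inl ⟨(hs hxy).1, .single hxy, hrel hκxy hxy⟩
    · exact .inr ⟨(hs hyx).1, .single hyx, hrel (Ne.symm hκxy) hyx⟩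

theorem exists_isTransitiveOrientation_of_cut {A : Finset V} {a b : V} (hs : SupportedOn D s)
    (ih : ∀ c ⊂ s, ∃ T, IsTransitiveOrientation T (restrict c D))
    (hA : A ⊆ s) (ha : a ∈ A) (hb : b ∈ s) (hbA : b ∉ A)
    (hcut : ∀ x ∈ A, ∀ y ∈ s, y ∉ A → SymmGen D x y) :
    ∃ T, IsTransitiveOrientation T D := by
  classical
  let κ x := if x ∈ A then A else s \ A
  have hκ_in : ∀ {x}, x ∈ A → κ x = A := fun hx => if_pos hx
  have hκ_out : ∀ {x}, x ∉ A → κ x = s \ A := fun hx => if_neg hx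
  have hA_ne : A ≠ s \ A := fun h => (Finset.mem_sdiff.1 (h ▸ ha)).2 ha
  refine exists_isTransitiveOrientation_of_blocks hs ih κ (fun x => ?_) (fun x hx => ?_)
    (fun x y hy => ?_) (fun x y => x ∈ A ∧ y ∈ s ∧ y ∉ A)
    (fun x y hxy hyx => hyx.2.2 hxy.1) (fun x y z hxy hyz => absurd hyz.1 hxy.2.2)
    (fun x y hxy => by rw [hκ_in hxy.1, hκ_out hxy.2.2]; exact hA_ne)
    (fun x y z hx hyz => ⟨hκ_in hyz.1 ▸ hx, hyz.2⟩)
    (fun x y z hz hxy => ⟨hxy.1, Finset.mem_sdiff.1 (hκ_out hxy.2.2 ▸ hz)⟩)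
    (fun x y hκxy => ?_)
  · by_cases hx : x ∈ A
    · rw [hκ_in hx, Finset.ssubset_iff_of_subset hA]
      exact ⟨b, hb, hbA⟩
    · rw [hκ_out hx, Finset.ssubset_iff_of_subset Finset.sdiff_subset]
      exact ⟨a, hA ha, fun h => (Finset.mem_sdiff.1 h).2 ha⟩
  · by_cases hxA : x ∈ A
    · rwa [hκ_in hxA]
    · rw [hκ_out hxA]
      exact Finset.mem_sdiff.2 ⟨hx, hxA⟩
  · by_cases hx : x ∈ A
    · rw [hκ_in hx] at hy ⊢
      exact hκ_in hy
    · rw [hκ_out hx] at hy ⊢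
      exact hκ_out (Finset.mem_sdiff.1 hy).2
  · have hsymmGen_iff : ∀ {x y}, x ∈ A → y ∉ A → (SymmGen D x y ↔ y ∈ s) := fun hx hy =>
      ⟨fun h => (hs.mem_of_symmGen h).2, fun h => hcut _ hx _ h hy⟩
    by_cases hx : x ∈ A <;> by_cases hy : y ∈ A
    · exact absurd ((hκ_in hx).trans (hκ_in hy).symm) hκxy
    · rw [hsymmGen_iff hx hy]
      simp [SymmGen, hx, hy]
    · rw [symmGen_comm (r := D), hsymmGen_iff hy hx]
      simp [SymmGen, hx, hy]
    · exact absurd ((hκ_out hx).trans (hκ_out hy).symm) hκxy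

theorem exists_isTransitiveOrientation_of_not_coConnectedOn (hs : SupportedOn D s)
    (hco : ¬ CoConnectedOn D s)
    (ih : ∀ c ⊂ s, ∃ T, IsTransitiveOrientation T (restrict c D)) :
    ∃ T, IsTransitiveOrientation T D := by
  classical
  obtain ⟨x₀, hx₀, y₀, hy₀, hxy₀⟩ : ∃ x ∈ s, ∃ y ∈ s, ¬ CoReachOn D s x y := by
    simpa [CoConnectedOn] using hco
  refine exists_isTransitiveOrientation_of_cut hs ih (Finset.filter_subset (CoReachOn D s x₀) s)
    (Finset.mem_filter.2 ⟨hx₀, .refl⟩) hy₀ (fun h => hxy₀ (Finset.mem_filter.1 h).2)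
    fun x hx y hy hyA => ?_
  obtain ⟨hx, hx₀x⟩ := Finset.mem_filter.1 hx
  exact symmGen_of_not_coReachOn hy hx₀ hx₀x
    (fun h => hyA (Finset.mem_filter.2 ⟨hy, h⟩)) |>.symm

section Erase

variable [DecidableEq V]

lemma exists_rel_reflTransGen_erase (hs : SupportedOn D s) (h : ReflTransGen D v x)
    (hx : x ∈ s.erase v) : ∃ z, D v z ∧ ReflTransGen (restrict (s.erase v) D) z x := by
  suffices H : ∀ a, ReflTransGen D a x → (a ∈ s.erase v ∧ ReflTransGen (restrict (s.erase v) D) a x)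
      ∨ ∃ z, D v z ∧ ReflTransGen (restrict (s.erase v) D) z x from
    (H v h).resolve_left fun h => Finset.notMem_erase v s h.1
  intro a ha
  induction ha using Relation.ReflTransGen.head_induction_on with
  | refl => exact .inl ⟨hx, .refl⟩
  | @head a a' haa' _ ih =>
    obtain ⟨ha', h⟩ | h := ih
    · by_cases hav : a = v
      · exact .inr ⟨a', hav ▸ haa', h⟩
      · have ha : a ∈ s.erase v := Finset.mem_erase.2 ⟨hav, (hs haa').1⟩
        exact .inl ⟨ha, .head ⟨ha, ha', haa'⟩ h⟩
    · exact .inr h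

lemma exists_reflTransGen_erase_rel (hs : SupportedOn D s) (h : ReflTransGen D x v)
    (hx : x ∈ s.erase v) : ∃ z, ReflTransGen (restrict (s.erase v) D) x z ∧ D z v := by
  suffices H : ∀ a, ReflTransGen D x a → (a ∈ s.erase v ∧ ReflTransGen (restrict (s.erase v) D) x a)
      ∨ ∃ z, ReflTransGen (restrict (s.erase v) D) x z ∧ D z v from
    (H v h).resolve_left fun h => Finset.notMem_erase v s h.1
  intro a ha
  induction ha with
  | refl => exact .inl ⟨hx, .refl⟩
  | @tail a' a _ ha'a ih =>
    obtain ⟨ha', h⟩ | h := ih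
    · by_cases hav : a = v
      · exact .inr ⟨a', h, hav ▸ ha'a⟩
      · have ha : a ∈ s.erase v := Finset.mem_erase.2 ⟨hav, (hs ha'a).2⟩
        exact .inl ⟨ha, h.tail ⟨ha', ha, ha'a⟩⟩
    · exact .inr h

lemma eq_of_coReachOn_of_forall_symmGen (hadj : ∀ w ∈ s.erase v, SymmGen D v w)
    (h : CoReachOn D s v y) : y = v := by
  obtain rfl | ⟨c, hvc, -⟩ := h.cases_head
  · rfl
  · exact absurd (hadj c (Finset.mem_erase.2 ⟨hvc.2.2.1.symm, hvc.2.1⟩)) hvc.2.2.2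

lemma not_coReachOn_of_forall_symmGen (hb : b ∈ s.erase v)
    (hbv : ∀ c ∈ s.erase v, CoReachOn D (s.erase v) b c → SymmGen D v c) :
    ¬ CoReachOn D s b v := by
  suffices H : ∀ a, CoReachOn D s b a → a ∈ s.erase v ∧ CoReachOn D (s.erase v) b a from
    fun h => Finset.notMem_erase v s (H v h).1
  intro a h
  induction h with
  | refl => exact ⟨hb, .refl⟩
  | @tail a a' _ haa' ih =>
    obtain ⟨ha, hba⟩ := ih
    have ha' : a' ∈ s.erase v := by
      refine Finset.mem_erase.2 ⟨?_, haa'.2.1⟩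
      rintro rfl
      exact haa'.2.2.2 (hbv a ha hba).symm
    exact ⟨ha', hba.tail ⟨ha, ha', haa'.2.2⟩⟩

namespace IsQuasiTransitive

variable (hD : IsQuasiTransitive D) (hs : SupportedOn D s) (hw : w ∈ s.erase v)
  (hvw : ¬ SymmGen D v w)
include hD hvw

lemma reflTransGen_erase_symm_of_rel (hvz : D v z)
    (h : ReflTransGen (restrict (s.erase v) D) z w) :
    ReflTransGen (restrict (s.erase v) D) w z := by
  by_contra h'
  obtain hzw | hwz := (hD.restrict _).symmGen_of_reflTransGen h h'
  · exact hvw (hD.symmGen_of_rel_of_rel hvz hzw.2.2)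
  · exact h' (.single hwz)

lemma reflTransGen_erase_symm_of_rel' (hzv : D z v)
    (h : ReflTransGen (restrict (s.erase v) D) w z) :
    ReflTransGen (restrict (s.erase v) D) z w := by
  by_contra h'
  obtain hwz | hzw := (hD.restrict _).symmGen_of_reflTransGen h h'
  · exact hvw (hD.symmGen_of_rel_of_rel hwz.2.2 hzv).symm
  · exact h' (.single hzw)

include hs hw

lemma reflTransGen_erase_total (hst : StronglyConnectedOn D s) (hx : x ∈ s.erase v) :
    ReflTransGen (restrict (s.erase v) D) x w ∨ ReflTransGen (restrict (s.erase v) D) w x := by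
  by_contra! h
  have hxw : ¬ SymmGen D x w := by
    rintro (hxw | hwx)
    · exact h.1 (.single ⟨hx, hw, hxw⟩)
    · exact h.2 (.single ⟨hw, hx, hwx⟩)
  have hne : x ≠ w := by
    rintro rfl
    exact h.1 .refl
  obtain ⟨p, q, hpq, hxp, hwp, hqx, hqw⟩ := hD.bridged_of_reflTransGen
    (hst x (Finset.mem_of_mem_erase hx) w (Finset.mem_of_mem_erase hw)) ⟨hne, hxw⟩
  have hp : p ∈ s.erase v := by
    refine Finset.mem_erase.2 ⟨?_, (hs hpq).1⟩
    rintro rfl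
    exact hvw (.of_rel_symm hwp)
  have hq : q ∈ s.erase v := by
    refine Finset.mem_erase.2 ⟨?_, (hs hpq).2⟩
    rintro rfl
    exact hvw (.of_rel hqw)
  exact h.1 (.head ⟨hx, hp, hxp⟩ (.head ⟨hp, hq, hpq⟩ (.single ⟨hq, hw, hqw⟩)))

theorem stronglyConnectedOn_erase (hst : StronglyConnectedOn D s) (hv : v ∈ s) :
    StronglyConnectedOn (restrict (s.erase v) D) (s.erase v) := by
  have key : ∀ x ∈ s.erase v, ReflTransGen (restrict (s.erase v) D) x w ∧
      ReflTransGen (restrict (s.erase v) D) w x := by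
    intro x hx
    obtain h | h := hD.reflTransGen_erase_total hs hw hvw hst hx
    · obtain ⟨z, hvz, hzx⟩ :=
        exists_rel_reflTransGen_erase hs (hst v hv x (Finset.mem_of_mem_erase hx)) hx
      exact ⟨h, (hD.reflTransGen_erase_symm_of_rel hvw hvz (hzx.trans h)).trans hzx⟩
    · obtain ⟨z, hxz, hzv⟩ :=
        exists_reflTransGen_erase_rel hs (hst x (Finset.mem_of_mem_erase hx) v hv) hx
      exact ⟨hxz.trans (hD.reflTransGen_erase_symm_of_rel' hvw hzv (h.trans hxz)), h⟩
  exact fun x hx y hy => (key x hx).1.trans (key y hy).2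

end IsQuasiTransitive

end Erase

theorem IsQuasiTransitive.coConnectedOn_of_forall_exists_not_symmGen (hD : IsQuasiTransitive D)
    (htst : StronglyConnectedOn (restrict t D) t) (hu : u ∈ t) (huv : D u v)
    (hB : ∀ b ∈ t, ∃ c ∈ t, CoReachOn D t b c ∧ ¬ SymmGen D v c) : CoConnectedOn D t := by
  suffices H : ∀ y ∈ t, CoReachOn D t u y from fun x hx y hy => (H x hx).symm.trans (H y hy)
  by_contra! ⟨y, hy, huy⟩
  have hdom_u : ∀ y ∈ t, ¬ CoReachOn D t u y → D u y := by
    intro y hy huy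
    obtain ⟨c, hc, hyc, hvc⟩ := hB y hy
    have hyu : ¬ CoReachOn D t y u := fun h => huy h.symm
    have huc : D u c :=
      hD.rel_of_rel_of_not_symmGen huv hvc (symmGen_of_not_coReachOn hu hy hyc hyu)
    exact hD.rel_of_coReachOn_of_rel hu hc (fun h => hyu (hyc.trans h)) hyc.symm huc
  have hdom : ∀ z, CoReachOn D t u z → ∀ y ∈ t, ¬ CoReachOn D t u y → D z y :=
    fun z huz y hy huy => hD.rel_of_coReachOn_of_rel' hy hu huy huz (hdom_u y hy huy)
  have hclosed : ∀ a, ReflTransGen (restrict t D) a u → CoReachOn D t u a := by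
    intro a ha
    induction ha using Relation.ReflTransGen.head_induction_on with
    | refl => exact .refl
    | @head a a' haa' _ ih =>
      by_contra hua
      exact hD.asymm haa'.2.2 (hdom a' ih a haa'.1 hua)
  exact huy (hclosed y (htst y hy u hu))

/- Remove a vertex `v`. If `v` is adjacent to all other vertices, it is isolated in the complement.
Otherwise `s.erase v` stays strongly connected. A co-component of `s.erase v` without non-neighbours
of `v` is not joined to `v` in the complement. If there is none, the co-component of an
in-neighbour `u` of `v` dominates the rest of `s.erase v`, hence is all of it, and by induction
`s.erase v = {u}`, although `u` is adjacent to `v`. -/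
theorem IsQuasiTransitive.subsingleton_of_coConnectedOn [DecidableEq V]
    (hD : IsQuasiTransitive D) (hs : SupportedOn D s) (hst : StronglyConnectedOn D s)
    (hco : CoConnectedOn D s) : (s : Set V).Subsingleton := by
  induction s using Finset.strongInduction generalizing D with
  | H s ih =>
  intro v hv y hy
  by_cases hadj : ∀ w ∈ s.erase v, SymmGen D v w
  · exact (eq_of_coReachOn_of_forall_symmGen hadj (hco v hv y hy)).symm
  exfalso
  push Not at hadj
  obtain ⟨w, hw, hvw⟩ := hadj
  have htst := hD.stronglyConnectedOn_erase hs hw hvw hst hv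
  by_cases hB : ∃ b ∈ s.erase v, ∀ c ∈ s.erase v, CoReachOn D (s.erase v) b c → SymmGen D v c
  · obtain ⟨b, hb, hbv⟩ := hB
    exact not_coReachOn_of_forall_symmGen hb hbv (hco b (Finset.mem_of_mem_erase hb) v hv)
  push Not at hB
  obtain ⟨u, hu, huv⟩ : ∃ u ∈ s.erase v, D u v := by
    obtain h | ⟨u, -, huv⟩ := (hst w (Finset.mem_of_mem_erase hw) v hv).cases_tail
    · exact absurd (h ▸ hw) (Finset.notMem_erase v s)
    · exact ⟨u, Finset.mem_erase.2 ⟨hD.ne_of_rel huv, (hs huv).1⟩, huv⟩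
  have htco : CoConnectedOn (restrict (s.erase v) D) (s.erase v) := by
    rw [CoConnectedOn, coReachOn_restrict]
    exact hD.coConnectedOn_of_forall_exists_not_symmGen htst hu huv hB
  obtain ⟨c, hc, -, hvc⟩ := hB u hu
  have hcu := ih _ (Finset.erase_ssubset hv) (hD.restrict _) (supportedOn_restrict _ _) htst htco
    hc hu
  exact hvc (hcu ▸ .of_rel_symm huv)

theorem IsQuasiTransitive.exists_isTransitiveOrientation (hD : IsQuasiTransitive D)
    (hs : SupportedOn D s) : ∃ T, IsTransitiveOrientation T D := by
  classical
  induction s using Finset.strongInduction generalizing D with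
  | H s ih =>
  have ih' : ∀ c ⊂ s, ∃ T, IsTransitiveOrientation T (restrict c D) :=
    fun c hc => ih c hc (hD.restrict c) (supportedOn_restrict c D)
  by_cases hst : StronglyConnectedOn D s
  · by_cases hco : CoConnectedOn D s
    · have hsub := hD.subsingleton_of_coConnectedOn hs hst hco
      refine ⟨D, fun _ _ => Iff.rfl, hD.asymm, fun x y _ hxy _ => ?_⟩
      exact (hD.ne_of_rel hxy (hsub (hs hxy).1 (hs hxy).2)).elim
    · exact exists_isTransitiveOrientation_of_not_coConnectedOn hs hco ih'
  · exact hD.exists_isTransitiveOrientation_of_not_stronglyConnectedOn hs hst ih'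

lemma IsTransitiveOrientation.isOrientation {G : SimpleGraph V} {T : V → V → Prop}
    (hT : IsTransitiveOrientation T D) (hD : IsOrientation G D) : IsOrientation G T :=
  ⟨fun _ _ h => hT.asymm h.1 h.2, fun u v => (hD.2 u v).trans (hT.symmGen_iff u v).symm⟩

end GhouilaHouri

open GhouilaHouri

lemma SimpleGraph.edist_vec_three {W : Type*} {H : SimpleGraph W} {a b c : W} (hab : H.Adj a b)
    (hbc : H.Adj b c) (hac : ¬ H.Adj a c) (hne : a ≠ c) (i j : Fin 3) :
    H.edist (![a, b, c] i) (![a, b, c] j) = Nat.dist i j := by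
  have hab' : H.edist a b = 1 := edist_eq_one_iff_adj.2 hab
  have hbc' : H.edist b c = 1 := edist_eq_one_iff_adj.2 hbc
  have hac' : H.edist a c = 2 :=
    edist_eq_two_iff.2 ⟨hne, hac, b, (mem_commonNeighbors H).2 ⟨hab, hbc.symm⟩⟩
  fin_cases i <;> fin_cases j <;>
    simp [hab', hbc', hac', edist_comm (u := b), edist_comm (u := c), Nat.dist]

lemma exists_isometric_dirPath_three {V : Type*} {G : SimpleGraph V} {D : V → V → Prop}
    {x y z : V} (hD : IsOrientation G D) (hxy : D x y) (hyz : D y z) (hxz : ¬ G.Adj x z) :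
    ∃ f : Fin 3 → V, Function.Injective f ∧ (∀ u v, dirPath 3 u v ↔ D (f u) (f v)) ∧
      ∀ u v, (SimpleGraph.fromRel (dirPath 3)).edist u v = G.edist (f u) (f v) := by
  have hD_asymm : ∀ {a b}, D a b → ¬ D b a := fun hab hba => hD.1 _ _ ⟨hab, hba⟩
  have hD_irrefl : ∀ a, ¬ D a a := fun a haa => hD_asymm haa haa
  have hxz' : ¬ D x z ∧ ¬ D z x := not_or.1 (mt (hD.2 x z).2 hxz)
  have hne : x ≠ z := by
    rintro rfl
    exact hD_asymm hxy hyz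
  have hdist : ∀ u v, (SimpleGraph.fromRel (dirPath 3)).edist u v =
      G.edist (![x, y, z] u) (![x, y, z] v) := by
    intro u v
    rw [SimpleGraph.edist_vec_three ((hD.2 x y).2 (.inl hxy)) ((hD.2 y z).2 (.inl hyz)) hxz hne,
      ← SimpleGraph.edist_vec_three (H := SimpleGraph.fromRel (dirPath 3)) (a := 0) (b := 1)
        (c := 2) (by simp [dirPath]) (by simp [dirPath]) (by simp [dirPath]) (by decide)]
    fin_cases u <;> fin_cases v <;> rfl
  refine ⟨![x, y, z], fun u v huv => ?_, fun u v => ?_, hdist⟩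
  · simpa [huv] using hdist u v
  · fin_cases u <;> fin_cases v <;>
      simp [dirPath, hxy, hyz, hD_irrefl, hD_asymm hxy, hD_asymm hyz, hxz']

lemma IsOrientation.isQuasiTransitive {V : Type*} {G : SimpleGraph V} {D : V → V → Prop}
    (hD : IsOrientation G D)
    (hno : ¬ ∃ f : Fin 3 → V, Function.Injective f ∧ (∀ u v, dirPath 3 u v ↔ D (f u) (f v)) ∧
      ∀ u v, (SimpleGraph.fromRel (dirPath 3)).edist u v = G.edist (f u) (f v)) :
    IsQuasiTransitive D where
  asymm x y hxy hyx := hD.1 x y ⟨hxy, hyx⟩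
  symmGen_of_rel_of_rel x y z hxy hyz := by
    by_contra hxz
    exact hno (exists_isometric_dirPath_three hD hxy hyz (mt (hD.2 x z).1 hxz))

theorem stmt14 (V : Type) [Fintype V] (G : SimpleGraph V) :
    (∃ D : V → V → Prop, IsOrientation G D ∧
      ∀ x y z, D x y → D y z → D x z) ↔ ¬ IsoRamseyArrow G (dirPath 3) := by
  constructor
  · rintro ⟨D, hD, htrans⟩ harrow
    obtain ⟨f, -, hf, -⟩ := harrow D hD
    have h02 : D (f 0) (f 2) := htrans _ _ _ ((hf 0 1).1 rfl) ((hf 1 2).1 rfl)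
    exact absurd ((hf 0 2).2 h02) (by simp [dirPath])
  · intro harrow
    simp only [IsoRamseyArrow, not_forall] at harrow
    obtain ⟨D, hD, hno⟩ := harrow
    obtain ⟨T, hT⟩ := (hD.isQuasiTransitive hno).exists_isTransitiveOrientation
      (s := Finset.univ) fun _ _ _ => ⟨Finset.mem_univ _, Finset.mem_univ _⟩
    exact ⟨T, hT.isOrientation hD, fun _ _ _ hxy hyz => hT.trans hxy hyz⟩
end

section
/- If a finite simple graph G satisfies G ⇒ I_n for some n ≥ 1, then the chromatic number of G is at least n. -/
theorem stmt15 (n : ℕ) (hn : 1 ≤ n) (V : Type) [Fintype V] (G : SimpleGraph V)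
    (h : IsoRamseyArrow G (dirPath n)) :
    (n : ℕ∞) ≤ G.chromaticNumber := by
  obtain ⟨m, rfl⟩ : ∃ m, n = m + 1 := ⟨n - 1, (Nat.succ_pred_eq_of_pos hn).symm⟩
  by_contra hlt
  push_neg at hlt
  have hcol : G.Colorable m := by
    rw [← SimpleGraph.chromaticNumber_le_iff_colorable]
    have : G.chromaticNumber < (m : ℕ∞) + 1 := by
      simpa [Nat.cast_add, Nat.cast_one] using hlt
    exact ENat.lt_add_one_iff (by simp) |>.mp this
  obtain C := hcol.some
  set D : V → V → Prop := fun u v => G.Adj u v ∧ C u < C v with hD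
  have hor : IsOrientation G D := by
    constructor
    · rintro u v ⟨⟨_, h1⟩, ⟨_, h2⟩⟩
      exact absurd h2 (not_lt.mpr h1.le)
    · intro u v
      constructor
      · intro hadj
        rcases lt_or_gt_of_ne (C.valid hadj) with hc | hc
        · exact Or.inl ⟨hadj, hc⟩
        · exact Or.inr ⟨hadj.symm, hc⟩
      · rintro (⟨ha, _⟩ | ⟨ha, _⟩)
        · exact ha
        · exact ha.symm
  obtain ⟨f, hfin, hfE, -⟩ := h D hor
  have hsm : StrictMono (fun i : Fin (m + 1) => C (f i)) := by
    rw [Fin.strictMono_iff_lt_succ]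
    intro i
    have : dirPath (m + 1) i.castSucc i.succ := by
      simp [dirPath]
    exact ((hfE _ _).mp this).2
  have : m + 1 ≤ m := by
    simpa using Fintype.card_le_of_injective _ hsm.injective
  omega
end

section
/- Let f : G → H be a weak homomorphism between finite simple graphs. Then ddiam_I(G) ≤ max{ Σ_{y∈F} ddiam_I(f⁻¹(y)) : F ⊆ V_H, |F| ≤ χ(H) }. -/
/-- `ddiam_I(G)`: the largest `n` with `G ⇒ I_n` (and `0` if there is none). -/
noncomputable def ddiamI {V : Type*} (G : SimpleGraph V) : ℕ :=
  sSup {n : ℕ | IsoRamseyArrow G (dirPath n)}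



/-- chain of adjacent vertices bounds edist -/
lemma chainEdist {V : Type*} (G : SimpleGraph V) (h : ℕ → V) (a : ℕ) :
    ∀ b, a ≤ b → (∀ t, a ≤ t → t < b → G.Adj (h t) (h (t+1))) →
    G.edist (h a) (h b) ≤ (b - a : ℕ) := by
  intro b
  induction b with
  | zero => intro hab _; interval_cases a; simp
  | succ b ih =>
    intro hab hadj
    rcases Nat.eq_or_lt_of_le hab with heq | hlt2
    · subst heq; simp
    · have hab' : a ≤ b := by omega
      calc G.edist (h a) (h (b+1)) ≤ G.edist (h a) (h b) + G.edist (h b) (h (b+1)) :=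
            SimpleGraph.edist_triangle
        _ ≤ (b - a : ℕ) + 1 := by
            gcongr
            · exact ih hab' (fun t ht1 ht2 => hadj t ht1 (by omega))
            · exact le_of_eq (SimpleGraph.edist_eq_one_iff_adj.mpr (hadj b hab' (by omega)))
        _ ≤ ((b+1) - a : ℕ) := by
            rw [← Nat.cast_one, ← Nat.cast_add]
            exact_mod_cast Nat.le_of_eq (by omega)

lemma walkLB {V : Type*} (G : SimpleGraph V) (φ : V → ℕ)
    (hφ : ∀ u v, G.Adj u v → Nat.dist (φ u) (φ v) ≤ 1) (u v : V) :
    (Nat.dist (φ u) (φ v) : ℕ∞) ≤ G.edist u v := by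
  rcases eq_or_ne (G.edist u v) ⊤ with htop | hne
  · simp [htop]
  · obtain ⟨p, hp⟩ := SimpleGraph.exists_walk_of_edist_ne_top hne
    rw [← hp]
    norm_cast
    clear hp hne
    induction p with
    | nil => simp
    | cons hadj p ih =>
      rename_i x y z
      calc Nat.dist (φ x) (φ z) ≤ Nat.dist (φ x) (φ y) + Nat.dist (φ y) (φ z) :=
            Nat.dist.triangle_inequality _ _ _
        _ ≤ 1 + p.length := by gcongr; exact hφ _ _ hadj
        _ = (SimpleGraph.Walk.cons hadj p).length := by simp [Nat.add_comm]

lemma homEdist {V V' : Type*} (G : SimpleGraph V) (G' : SimpleGraph V') (φ : V → V')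
    (h : ∀ u v, G.Adj u v → G'.Adj (φ u) (φ v)) (u v : V) :
    G'.edist (φ u) (φ v) ≤ G.edist u v := by
  rcases eq_or_ne (G.edist u v) ⊤ with htop | hne
  · simp [htop]
  · obtain ⟨p, hp⟩ := SimpleGraph.exists_walk_of_edist_ne_top hne
    rw [← hp]
    clear hp hne
    induction p with
    | nil => simp
    | cons hadj p ih =>
      rename_i x y z
      calc G'.edist (φ x) (φ z) ≤ G'.edist (φ x) (φ y) + G'.edist (φ y) (φ z) :=
            SimpleGraph.edist_triangle
        _ ≤ 1 + p.length := by
            gcongr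
            exact le_of_eq (SimpleGraph.edist_eq_one_iff_adj.mpr (h _ _ hadj))
        _ = ((SimpleGraph.Walk.cons hadj p).length : ℕ∞) := by
            simp [Nat.add_comm]

section helpers
variable {V : Type*} (G : SimpleGraph V)

lemma pathEdist (n : ℕ) (i j : Fin n) :
    (SimpleGraph.fromRel (dirPath n)).edist i j = (Nat.dist (i : ℕ) (j : ℕ) : ℕ∞) := by
  apply le_antisymm
  · -- upper bound via chain
    have key : ∀ i j : Fin n, (i : ℕ) ≤ j →
        (SimpleGraph.fromRel (dirPath n)).edist i j ≤ (Nat.dist (i:ℕ) (j:ℕ) : ℕ∞) := by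
      intro i j hij
      have hdist : Nat.dist (i:ℕ) (j:ℕ) = (j:ℕ) - (i:ℕ) := Nat.dist_eq_sub_of_le hij
      rw [hdist]
      set h : ℕ → Fin n := fun t => if ht : t < n then ⟨t, ht⟩ else i with hh
      have hhi : h (i:ℕ) = i := by simp [hh, i.isLt]
      have hhj : h (j:ℕ) = j := by simp [hh, j.isLt]
      have step : ∀ t, (i:ℕ) ≤ t → t < (j:ℕ) →
          (SimpleGraph.fromRel (dirPath n)).Adj (h t) (h (t+1)) := by
        intro t ht1 ht2
        have htn : t < n := lt_trans ht2 j.isLt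
        have htn1 : t + 1 < n ∨ t + 1 = n := by omega
        have htn1' : t + 1 < n := by
          rcases htn1 with h' | h'
          · exact h'
          · omega
        simp only [hh, dif_pos htn, dif_pos htn1']
        constructor
        · intro hcon; apply absurd (congrArg Fin.val hcon); simp
        · left; rfl
      have := chainEdist (SimpleGraph.fromRel (dirPath n)) h (i:ℕ) (j:ℕ) hij step
      rwa [hhi, hhj] at this
    rcases le_total (i:ℕ) (j:ℕ) with hij | hji
    · exact key i j hij
    · rw [SimpleGraph.edist_comm, Nat.dist_comm]; exact key j i hji
  · apply walkLB
    intro u v huv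
    rcases huv with ⟨hne, harc | harc⟩ <;> simp only [dirPath] at harc <;>
      simp [Nat.dist, ← harc]

lemma orientExists [Finite V] : ∃ D, IsOrientation G D := by
  obtain ⟨m, ⟨e⟩⟩ := Finite.exists_equiv_fin V
  refine ⟨fun u v => G.Adj u v ∧ e u < e v, ?_, ?_⟩
  · rintro u v ⟨⟨_, h1⟩, ⟨_, h2⟩⟩; exact absurd h2 (not_lt.mpr h1.le)
  · intro u v
    constructor
    · intro hadj
      rcases lt_trichotomy (e u) (e v) with h | h | h
      · exact Or.inl ⟨hadj, h⟩
      · exact absurd (e.injective h) hadj.ne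
      · exact Or.inr ⟨hadj.symm, h⟩
    · rintro (⟨h, _⟩ | ⟨h, _⟩); exacts [h, h.symm]

lemma arrowZero : IsoRamseyArrow G (dirPath 0) := by
  intro D hD
  exact ⟨Fin.elim0, fun a => a.elim0, fun u => u.elim0, fun u => u.elim0⟩

lemma sBdd [Finite V] : BddAbove {n : ℕ | IsoRamseyArrow G (dirPath n)} := by
  refine ⟨Nat.card V, fun n hn => ?_⟩
  obtain ⟨D, hD⟩ := orientExists G
  obtain ⟨g, hginj, -, -⟩ := hn D hD
  simpa using Nat.card_le_card_of_injective g hginj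

lemma ddiamI_mem [Finite V] : IsoRamseyArrow G (dirPath (ddiamI G)) :=
  Nat.sSup_mem ⟨0, arrowZero G⟩ (sBdd G)

lemma notArrowSucc [Finite V] : ¬ IsoRamseyArrow G (dirPath (ddiamI G + 1)) := by
  intro h
  have h2 : ddiamI G + 1 ≤ ddiamI G := by
    unfold ddiamI; exact le_csSup (sBdd G) h
  omega


end helpers

theorem stmt16 (V W : Type) [Fintype V] [Fintype W]
    (G : SimpleGraph V) (H : SimpleGraph W) (f : V → W)
    (hf : ∀ u v, G.Adj u v → f u = f v ∨ H.Adj (f u) (f v)) :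
    ∃ F : Finset W, (F.card : ℕ∞) ≤ H.chromaticNumber ∧
      ddiamI G ≤ ∑ y ∈ F, ddiamI (G.induce {x : V | f x = y}) := by
  classical
  -- coloring with χ(H) colors
  set m : ℕ := H.chromaticNumber.toNat with hm
  have hχne : H.chromaticNumber ≠ ⊤ :=
    SimpleGraph.chromaticNumber_ne_top_iff_exists.mpr ⟨Fintype.card W, H.colorable_of_fintype⟩
  obtain ⟨C⟩ : H.Colorable m := H.colorable_chromaticNumber_of_fintype
  -- fibers
  set S : W → Set V := fun y => {x : V | f x = y} with hS
  set Gy : (y : W) → SimpleGraph (S y) := fun y => G.induce (S y) with hGy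
  have hfib : ∀ y : W, ∃ Dy : S y → S y → Prop, IsOrientation (Gy y) Dy ∧
      ¬ ∃ e : Fin (ddiamI (Gy y) + 1) → S y, Function.Injective e ∧
        (∀ u v, dirPath _ u v ↔ Dy (e u) (e v)) ∧
        (∀ u v, (SimpleGraph.fromRel (dirPath (ddiamI (Gy y) + 1))).edist u v
          = (Gy y).edist (e u) (e v)) := by
    intro y
    by_contra hcon
    push_neg at hcon
    apply notArrowSucc (Gy y)
    intro D hD
    obtain ⟨e, h1, h2, h3⟩ := hcon D hD
    exact ⟨e, h1, h2, h3⟩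
  choose Dy hDyOr hDyNo using hfib
  -- lifted fiber relation and the global orientation
  set Dy' : W → V → V → Prop :=
    fun y u v => ∃ (hu : f u = y) (hv : f v = y), Dy y ⟨u, hu⟩ ⟨v, hv⟩ with hDy'
  set D : V → V → Prop :=
    fun u v => G.Adj u v ∧ (Dy' (f u) u v ∨ (f u ≠ f v ∧ C (f u) < C (f v))) with hD
  have Dy'_asym : ∀ y u v, Dy' y u v → Dy' y v u → False := by
    rintro y u v ⟨hu, hv, h1⟩ ⟨hv', hu', h2⟩
    exact (hDyOr y).1 ⟨u, hu⟩ ⟨v, hv⟩ ⟨h1, h2⟩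
  have Dy'_eq : ∀ y u v, Dy' y u v → f u = y ∧ f v = y := by
    rintro y u v ⟨hu, hv, -⟩; exact ⟨hu, hv⟩
  have hDor : IsOrientation G D := by
    constructor
    · rintro u v ⟨⟨hadj1, h1⟩, ⟨hadj2, h2⟩⟩
      rcases h1 with hd1 | ⟨hne1, hlt1⟩
      · have hv1 : f v = f u := (Dy'_eq _ _ _ hd1).2
        rcases h2 with hd2 | ⟨hne2, hlt2⟩
        · rw [hv1] at hd2
          exact Dy'_asym (f u) u v hd1 hd2
        · exact hne2 hv1
      · rcases h2 with hd2 | ⟨hne2, hlt2⟩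
        · exact hne1 (Dy'_eq _ _ _ hd2).2
        · exact absurd hlt2 (not_lt.mpr hlt1.le)
    · intro u v
      constructor
      · intro hadj
        by_cases hfe : f u = f v
        · have hGyadj : (Gy (f u)).Adj ⟨u, rfl⟩ ⟨v, hfe.symm⟩ := hadj
          rcases ((hDyOr (f u)).2 _ _).mp hGyadj with h | h
          · exact Or.inl ⟨hadj, Or.inl ⟨rfl, hfe.symm, h⟩⟩
          · refine Or.inr ⟨hadj.symm, Or.inl ?_⟩
            rw [← hfe]
            exact ⟨hfe.symm, rfl, h⟩
        · have hH : H.Adj (f u) (f v) := (hf u v hadj).resolve_left hfe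
          rcases lt_or_gt_of_ne (C.valid hH) with h | h
          · exact Or.inl ⟨hadj, Or.inr ⟨hfe, h⟩⟩
          · exact Or.inr ⟨hadj.symm, Or.inr ⟨fun h' => hfe h'.symm, h⟩⟩
      · rintro (⟨h, -⟩ | ⟨h, -⟩); exacts [h, h.symm]
  -- the isometric dipath in (G, D)
  set N := ddiamI G with hNdef
  obtain ⟨g, ginj, garc, gdist⟩ := ddiamI_mem G D hDor
  -- basic facts about the embedded path
  have fact1 : ∀ i j : Fin N, G.edist (g i) (g j) = (Nat.dist (i:ℕ) (j:ℕ) : ℕ∞) := by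
    intro i j; rw [← gdist, pathEdist]
  have fact_adj : ∀ i j : Fin N, (i:ℕ)+1 = (j:ℕ) → D (g i) (g j) :=
    fun i j h => (garc i j).mp h
  have step : ∀ i j : Fin N, (i:ℕ)+1 = (j:ℕ) →
      (f (g i) = f (g j) ∨ C (f (g i)) < C (f (g j))) := by
    intro i j h
    rcases (fact_adj i j h).2 with hd | ⟨-, hlt⟩
    · exact Or.inl (Dy'_eq _ _ _ hd).2.symm
    · exact Or.inr hlt
  have mono : ∀ t : ℕ, ∀ i j : Fin N, (j:ℕ) = (i:ℕ) + t → C (f (g i)) ≤ C (f (g j)) := by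
    intro t
    induction t with
    | zero =>
      intro i j h
      have : i = j := Fin.ext (by omega)
      rw [this]
    | succ t ih =>
      intro i j h
      have hj' : (i:ℕ) + t < N := by have := j.isLt; omega
      have h1 : C (f (g i)) ≤ C (f (g ⟨(i:ℕ)+t, hj'⟩)) := ih i _ rfl
      have h2 : ((⟨(i:ℕ)+t, hj'⟩ : Fin N) : ℕ) + 1 = (j:ℕ) := by simp; omega
      rcases step _ j h2 with he | hlt
      · exact h1.trans (le_of_eq (congrArg C he))
      · exact h1.trans hlt.le
  have constRun : ∀ t : ℕ, ∀ i l : Fin N, (l:ℕ) = (i:ℕ) + t →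
      C (f (g i)) = C (f (g l)) → f (g l) = f (g i) := by
    intro t
    induction t with
    | zero =>
      intro i l h _
      have : l = i := Fin.ext (by omega)
      rw [this]
    | succ t ih =>
      intro i l h hCeq
      have hl' : (i:ℕ) + t < N := by have := l.isLt; omega
      set l' : Fin N := ⟨(i:ℕ)+t, hl'⟩ with hl'def
      have h2 : (l':ℕ) + 1 = (l:ℕ) := by simp [hl'def]; omega
      have hm1 : C (f (g i)) ≤ C (f (g l')) := mono t i l' rfl
      rcases step l' l h2 with he | hlt
      · have hCeq' : C (f (g i)) = C (f (g l')) := by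
          rw [hCeq, he]
        rw [← he]
        exact ih i l' rfl hCeq'
      · exact absurd (hCeq ▸ (lt_of_le_of_lt hm1 hlt)) (lt_irrefl _)
  have interval : ∀ i j l : Fin N, (i:ℕ) ≤ (l:ℕ) → (l:ℕ) ≤ (j:ℕ) →
      f (g i) = f (g j) → f (g l) = f (g i) := by
    intro i j l h1 h2 heq
    have c1 : C (f (g i)) ≤ C (f (g l)) := mono ((l:ℕ)-(i:ℕ)) i l (by omega)
    have c2 : C (f (g l)) ≤ C (f (g j)) := mono ((j:ℕ)-(l:ℕ)) l j (by omega)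
    have hce : C (f (g i)) = C (f (g l)) := by
      refine le_antisymm c1 (le_trans c2 (le_of_eq (congrArg C heq.symm)))
    exact constRun ((l:ℕ)-(i:ℕ)) i l (by omega) hce
  -- the finite set of fibers visited
  set F : Finset W := Finset.image (fun i : Fin N => f (g i)) Finset.univ with hF
  refine ⟨F, ?_, ?_⟩
  · -- cardinality bound via injectivity of the coloring on F
    have hinj : Set.InjOn C F := by
      intro y1 hy1 y2 hy2 hC
      simp only [hF, Finset.coe_image, Finset.coe_univ, Set.image_univ, Set.mem_range] at hy1 hy2
      obtain ⟨i1, rfl⟩ := hy1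
      obtain ⟨i2, rfl⟩ := hy2
      rcases le_total (i1:ℕ) (i2:ℕ) with h | h
      · exact (constRun ((i2:ℕ)-(i1:ℕ)) i1 i2 (by omega) hC).symm
      · exact constRun ((i1:ℕ)-(i2:ℕ)) i2 i1 (by omega) hC.symm
    have h1 : F.card ≤ m := by
      rw [← Finset.card_image_of_injOn hinj]
      calc (F.image C).card ≤ Fintype.card (Fin m) := Finset.card_le_univ _
        _ = m := Fintype.card_fin m
    calc (F.card : ℕ∞) ≤ (m : ℕ∞) := by exact_mod_cast h1
      _ = H.chromaticNumber := ENat.coe_toNat hχne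
  · -- the sum bound
    have hNsum : N = ∑ y ∈ F, (Finset.univ.filter (fun i : Fin N => f (g i) = y)).card := by
      rw [hF, ← Finset.card_eq_sum_card_image (fun i : Fin N => f (g i)) Finset.univ]
      simp
    rw [hNsum]
    apply Finset.sum_le_sum
    intro y hy
    -- per-fiber bound
    set A : Finset (Fin N) := Finset.univ.filter (fun i : Fin N => f (g i) = y) with hA
    have hAne : A.Nonempty := by
      simp only [hF, Finset.mem_image] at hy
      obtain ⟨i0, -, hi0⟩ := hy
      exact ⟨i0, by simp [hA, hi0]⟩
    set a : Fin N := A.min' hAne with ha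
    set b : Fin N := A.max' hAne with hb
    have hay : f (g a) = y := by
      have := A.min'_mem hAne
      simpa [hA] using this
    have hby : f (g b) = y := by
      have := A.max'_mem hAne
      simpa [hA] using this
    have hab : (a:ℕ) ≤ (b:ℕ) := A.min'_le b (A.max'_mem hAne)
    have hintA : ∀ l : Fin N, (a:ℕ) ≤ (l:ℕ) → (l:ℕ) ≤ (b:ℕ) → f (g l) = y := by
      intro l h1 h2
      rw [interval a b l h1 h2 (hay.trans hby.symm), hay]
    have hAIcc : A = Finset.Icc a b := by
      ext l
      simp only [hA, Finset.mem_filter, Finset.mem_univ, true_and, Finset.mem_Icc]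
      constructor
      · intro hl
        exact ⟨A.min'_le l (by simp [hA, hl]), A.le_max' l (by simp [hA, hl])⟩
      · intro ⟨h1, h2⟩
        exact hintA l h1 h2
    have hAcard : A.card = (b:ℕ) + 1 - (a:ℕ) := by rw [hAIcc, Fin.card_Icc]
    set d : ℕ := ddiamI (Gy y) with hd
    by_contra hcon
    push_neg at hcon
    have hdb : (a:ℕ) + d ≤ (b:ℕ) := by
      rw [hAcard] at hcon
      omega
    -- build the forbidden embedding into the fiber
    have hlt : ∀ j : Fin (d+1), (a:ℕ) + (j:ℕ) < N := by
      intro j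
      have := b.isLt
      have := j.isLt
      omega
    set ι : Fin (d+1) → Fin N := fun j => ⟨(a:ℕ) + (j:ℕ), hlt j⟩ with hι
    have hιy : ∀ j : Fin (d+1), f (g (ι j)) = y := by
      intro j
      apply hintA
      · simp [hι]
      · simp [hι]; have := j.isLt; omega
    set emb : Fin (d+1) → (S y) := fun j => ⟨g (ι j), hιy j⟩ with hemb
    -- lifting between D and Dy y
    have liftD : ∀ u v : V, ∀ (hu : f u = y) (hv : f v = y),
        Dy y ⟨u, hu⟩ ⟨v, hv⟩ → D u v := by
      intro u v hu hv hdy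
      have hadj : (Gy y).Adj ⟨u, hu⟩ ⟨v, hv⟩ := ((hDyOr y).2 _ _).mpr (Or.inl hdy)
      refine ⟨hadj, Or.inl ?_⟩
      rw [hu]
      exact ⟨hu, hv, hdy⟩
    have downD : ∀ u v : V, ∀ (hu : f u = y) (hv : f v = y),
        D u v → Dy y ⟨u, hu⟩ ⟨v, hv⟩ := by
      rintro u v hu hv ⟨-, hdd | ⟨hne, -⟩⟩
      · rw [hu] at hdd
        obtain ⟨h1, h2, hdd⟩ := hdd
        exact hdd
      · exact absurd (hu.trans hv.symm) hne
    apply hDyNo y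
    refine ⟨emb, ?_, ?_, ?_⟩
    · -- injectivity
      intro j j' hjj
      have : g (ι j) = g (ι j') := congrArg Subtype.val hjj
      have := ginj this
      have : (a:ℕ) + (j:ℕ) = (a:ℕ) + (j':ℕ) := congrArg Fin.val this
      exact Fin.ext (by omega)
    · -- arcs
      intro j j'
      constructor
      · intro hjj
        have hjj' : (j:ℕ) + 1 = (j':ℕ) := hjj
        have hcons : ((ι j : Fin N) : ℕ) + 1 = ((ι j' : Fin N) : ℕ) := by
          show (a:ℕ) + (j:ℕ) + 1 = (a:ℕ) + (j':ℕ)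
          omega
        exact downD _ _ (hιy j) (hιy j') (fact_adj _ _ hcons)
      · intro hdy
        have hDuv : D (g (ι j)) (g (ι j')) := liftD _ _ (hιy j) (hιy j') hdy
        have hadj : G.Adj (g (ι j)) (g (ι j')) := hDuv.1
        have hdist1 : Nat.dist ((ι j : Fin N) : ℕ) ((ι j' : Fin N) : ℕ) = 1 := by
          have := fact1 (ι j) (ι j')
          rw [SimpleGraph.edist_eq_one_iff_adj.mpr hadj] at this
          exact_mod_cast this.symm
        have hcases : (j:ℕ) + 1 = (j':ℕ) ∨ (j':ℕ) + 1 = (j:ℕ) := by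
          have h' : Nat.dist ((a:ℕ)+(j:ℕ)) ((a:ℕ)+(j':ℕ)) = 1 := hdist1
          simp [Nat.dist] at h'
          omega
        rcases hcases with hc | hc
        · exact hc
        · exfalso
          have hcons : ((ι j' : Fin N) : ℕ) + 1 = ((ι j : Fin N) : ℕ) := by
            simp only [hι]; omega
          exact hDor.1 _ _ ⟨hDuv, fact_adj _ _ hcons⟩
    · -- distances
      intro j j'
      rw [pathEdist]
      have hnd : Nat.dist ((ι j : Fin N) : ℕ) ((ι j' : Fin N) : ℕ)
          = Nat.dist (j:ℕ) (j':ℕ) := by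
        simp only [hι, Nat.dist]; omega
      apply le_antisymm
      · -- lower bound for fiber distance via the ambient graph
        have hlow : G.edist (g (ι j)) (g (ι j')) ≤ (Gy y).edist (emb j) (emb j') := by
          have := homEdist (Gy y) G (fun x => (x : V)) (fun u v huv => huv) (emb j) (emb j')
          exact this
        rw [fact1, hnd] at hlow
        exact hlow
      · -- upper bound by walking along the path inside the fiber
        have hchain : ∀ t (ht : t < d), (Gy y).Adj (emb ⟨t, by omega⟩) (emb ⟨t+1, by omega⟩) := by
          intro t ht
          have hcons : ((ι ⟨t, by omega⟩ : Fin N) : ℕ) + 1 = ((ι ⟨t+1, by omega⟩ : Fin N) : ℕ) := by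
            show (a:ℕ) + t + 1 = (a:ℕ) + (t+1)
            omega
          have : G.Adj (g (ι ⟨t, by omega⟩)) (g (ι ⟨t+1, by omega⟩)) := (fact_adj _ _ hcons).1
          exact this
        set hfun : ℕ → (S y) := fun t => if ht : t < d+1 then emb ⟨t, ht⟩ else emb j with hhfun
        have key : ∀ p q : Fin (d+1), (p:ℕ) ≤ (q:ℕ) →
            (Gy y).edist (emb p) (emb q) ≤ (Nat.dist (p:ℕ) (q:ℕ) : ℕ∞) := by
          intro p q hpq
          have hdq : Nat.dist (p:ℕ) (q:ℕ) = (q:ℕ) - (p:ℕ) := Nat.dist_eq_sub_of_le hpq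
          rw [hdq]
          have hp : hfun (p:ℕ) = emb p := dif_pos p.isLt
          have hq : hfun (q:ℕ) = emb q := dif_pos q.isLt
          rw [← hp, ← hq]
          apply chainEdist
          · exact hpq
          · intro t ht1 ht2
            have htd : t < d := by have := q.isLt; omega
            have e1 : hfun t = emb ⟨t, by omega⟩ := dif_pos (by omega)
            have e2 : hfun (t+1) = emb ⟨t+1, by omega⟩ := dif_pos (by omega)
            rw [e1, e2]
            exact hchain t htd
        rcases le_total (j:ℕ) (j':ℕ) with h | h
        · exact key j j' h
        · rw [SimpleGraph.edist_comm, Nat.dist_comm]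
          exact key j' j h
end

section
/- Every simple graph G (possibly infinite) admits an orientation D with the following property: for every injective sequence (v_n)_{n∈ℕ} of vertices of G such that either (v_n, v_{n+1}) is an edge of D for every n ∈ ℕ, or (v_{n+1}, v_n) is an edge of D for every n ∈ ℕ, the set {v_n : n ∈ ℕ} has finite diameter in G, i.e., sup{ d_G(v_m, v_n) : m, n ∈ ℕ } < ∞. -/
lemma le_zero_add_one_of_moves_only_leaving (p : ℕ → Prop) (r : ℕ → ℕ)
    (hle : ∀ n, r (n + 1) ≤ r n + 1) (hmove : ∀ n, r (n + 1) = r n ∨ (p (r n) ∧ ¬ p (r (n + 1))))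
    (n : ℕ) : r n ≤ r 0 + 1 := by
  suffices r n = r 0 ∨ (¬ p (r n) ∧ r n ≤ r 0 + 1) by omega
  induction n with
  | zero => exact Or.inl rfl
  | succ n ih =>
    rcases hmove n with hstay | ⟨hp, hnp⟩
    · rwa [hstay]
    · rcases ih with h | ⟨h, -⟩
      · exact Or.inr ⟨hnp, h ▸ hle n⟩
      · exact absurd hp h

namespace SimpleGraph

variable {V : Type*} (G : SimpleGraph V)

def colorOrientation (c : V → Prop) (u w : V) : Prop :=
  G.Adj u w ∧ (c u ∧ ¬ c w ∨ (c u ↔ c w) ∧ WellOrderingRel u w)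

lemma isOrientation_colorOrientation (c : V → Prop) : IsOrientation G (G.colorOrientation c) := by
  refine ⟨?_, fun u w => ⟨fun hadj => ?_, ?_⟩⟩
  · rintro u w ⟨⟨-, huw⟩, ⟨-, hwu⟩⟩
    have := asymm (r := WellOrderingRel) (a := u) (b := w)
    tauto
  · by_cases huw : c u ↔ c w
    · rcases trichotomous_of WellOrderingRel u w with hr | rfl | hr
      · exact Or.inl ⟨hadj, Or.inr ⟨huw, hr⟩⟩
      · exact (hadj.ne rfl).elim
      · exact Or.inr ⟨hadj.symm, Or.inr ⟨huw.symm, hr⟩⟩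
    · by_cases hu : c u
      · exact Or.inl ⟨hadj, Or.inl ⟨hu, fun hw => huw ⟨fun _ => hw, fun _ => hu⟩⟩⟩
      · exact Or.inr ⟨hadj.symm, Or.inl ⟨by tauto, hu⟩⟩
  · rintro (⟨h, -⟩ | ⟨h, -⟩)
    exacts [h, h.symm]

section Rank

variable {G} {f : V → ℕ} (hf : ∀ ⦃u w⦄, G.Adj u w → f u ≤ f w + 1)
include hf

lemma eq_or_even_of_colorOrientation_even {u w : V}
    (h : G.colorOrientation (fun x => Even (f x)) u w) : f w = f u ∨ (Even (f u) ∧ ¬ Even (f w)) := by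
  obtain ⟨hadj, huw | ⟨hpar, -⟩⟩ := h
  · exact Or.inr huw
  · obtain h | h | h : f w = f u ∨ f w = f u + 1 ∨ f u = f w + 1 := by
      have := hf hadj
      have := hf hadj.symm
      omega
    · exact Or.inl h
    all_goals beta_reduce at hpar; rw [h, Nat.even_add_one] at hpar; tauto

lemma le_add_one_of_forall_colorOrientation_succ {v : ℕ → V}
    (hv : ∀ n, G.colorOrientation (fun x => Even (f x)) (v n) (v (n + 1))) (n : ℕ) :
    f (v n) ≤ f (v 0) + 1 :=
  le_zero_add_one_of_moves_only_leaving Even (fun n => f (v n)) (fun n => hf (hv n).1.symm)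
    (fun n => eq_or_even_of_colorOrientation_even hf (hv n)) n

lemma le_add_one_of_forall_colorOrientation_pred {v : ℕ → V}
    (hv : ∀ n, G.colorOrientation (fun x => Even (f x)) (v (n + 1)) (v n)) (n : ℕ) :
    f (v n) ≤ f (v 0) + 1 := by
  refine le_zero_add_one_of_moves_only_leaving (fun k => ¬ Even k) (fun n => f (v n))
    (fun n => hf (hv n).1) (fun n => ?_) n
  rcases eq_or_even_of_colorOrientation_even hf (hv n) with h | ⟨h, h'⟩
  exacts [Or.inl h.symm, Or.inr ⟨h', not_not.mpr h⟩]

end Rank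

noncomputable def componentRoot (x : V) : V := (G.connectedComponentMk x).out

noncomputable def rootDist (x : V) : ℕ := G.dist (G.componentRoot x) x

lemma reachable_componentRoot (x : V) : G.Reachable (G.componentRoot x) x :=
  ConnectedComponent.exact (G.connectedComponentMk x).out_eq

lemma Reachable.componentRoot_eq {u w : V} (h : G.Reachable u w) :
    G.componentRoot u = G.componentRoot w := by
  rw [componentRoot, componentRoot, ConnectedComponent.sound h]

lemma Adj.rootDist_le {u w : V} (h : G.Adj u w) : G.rootDist u ≤ G.rootDist w + 1 := by
  rw [rootDist, rootDist, h.reachable.componentRoot_eq, ← dist_eq_one_iff_adj.mpr h.symm]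
  exact h.symm.reachable.dist_triangle_right _

lemma Reachable.edist_le_rootDist_add {u w : V} (h : G.Reachable u w) :
    G.edist u w ≤ G.rootDist u + G.rootDist w := by
  calc G.edist u w ≤ G.edist u (G.componentRoot u) + G.edist (G.componentRoot u) w :=
        G.edist_triangle
    _ = G.rootDist u + G.rootDist w := by
        rw [rootDist, rootDist, ← h.componentRoot_eq,
          (G.reachable_componentRoot u).coe_dist_eq_edist,
          ((G.reachable_componentRoot u).trans h).coe_dist_eq_edist, edist_comm]

variable {G} in
lemma reachable_of_forall_adj_succ {v : ℕ → V}
    (hv : ∀ n, G.Adj (v n) (v (n + 1))) (m n : ℕ) : G.Reachable (v m) (v n) := by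
  have hzero : ∀ n, G.Reachable (v 0) (v n) := fun n => by
    induction n with
    | zero => rfl
    | succ n ih => exact ih.trans (hv n).reachable
  exact (hzero m).symm.trans (hzero n)

end SimpleGraph

theorem stmt18 (V : Type*) (G : SimpleGraph V) :
    ∃ D : V → V → Prop, IsOrientation G D ∧
      ∀ v : ℕ → V, Function.Injective v →
        ((∀ n, D (v n) (v (n + 1))) ∨ (∀ n, D (v (n + 1)) (v n))) →
        ∃ b : ℕ, ∀ m n, G.edist (v m) (v n) ≤ (b : ℕ∞) := by
  refine ⟨G.colorOrientation (fun x => Even (G.rootDist x)), G.isOrientation_colorOrientation _,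
    fun v _ hv => ?_⟩
  have hf : ∀ ⦃u w⦄, G.Adj u w → G.rootDist u ≤ G.rootDist w + 1 := fun _ _ h => h.rootDist_le
  have hadj : ∀ n, G.Adj (v n) (v (n + 1)) := by
    rcases hv with h | h
    exacts [fun n => (h n).1, fun n => (h n).1.symm]
  have hbound : ∀ n, G.rootDist (v n) ≤ G.rootDist (v 0) + 1 := by
    rcases hv with h | h
    exacts [SimpleGraph.le_add_one_of_forall_colorOrientation_succ hf h,
      SimpleGraph.le_add_one_of_forall_colorOrientation_pred hf h]
  refine ⟨2 * (G.rootDist (v 0) + 1), fun m n => ?_⟩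
  calc G.edist (v m) (v n) ≤ G.rootDist (v m) + G.rootDist (v n) :=
        (SimpleGraph.reachable_of_forall_adj_succ hadj m n).edist_le_rootDist_add
    _ ≤ (2 * (G.rootDist (v 0) + 1) : ℕ) := by
        norm_cast
        linarith [hbound m, hbound n]
end
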